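/- arXiv:2409.13849 — 7 statements merged into one kernel-verified Lean document; each statement's English description precedes it below -/
import Mathlib

section
/- Let p ≠ r be real numbers and let f, g : [0,∞) → ℝ be continuous functions such that, for some θ₀ ≥ 0, the Laplace transforms Lf(θ) = ∫_0^∞ e^{−θx} f(x) dx and Lg(θ) = ∫_0^∞ e^{−θx} g(x) dx converge absolutely for all θ > θ₀ and satisfy (r − p)·Lf(θ)·Lg(θ) = Lg(θ) − Lf(θ) for all θ > θ₀. Then for every x ≥ 0, ∫_0^x f(x−y) g(y) dy = (g(x) − f(x))/(r − p). -/
/-!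
For θ > θ₀ the Laplace transform turns the convolution on `[0, ∞)` into the product `Lf · Lg`
(this is `integral_convolution` for the functions `e^{-θx} f(x) 1_{x>0}`), so by the hypothesis
`k = (r - p) (f ⋆ g) - (g - f)` has vanishing Laplace transform on `(θ₀, ∞)`. It remains to see
that such a continuous `k` vanishes on `[0, ∞)` (Lerch). Putting `w = e^{-(θ₀+1)x} k`, all the
moments `∫ e^{-nx} w` vanish, hence by Weierstrass so does `∫ u(e^{-x}) w` for every continuous
`u` on `[0, 1]`. Every test function supported in `(0, ∞)` has the form `u(e^{-x})`, so `w = 0`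
by the fundamental lemma of the calculus of variations.
-/

open MeasureTheory Set Filter Polynomial
open scoped Convolution

def LaplaceIntegrable (f : ℝ → ℝ) (θ : ℝ) : Prop :=
  IntegrableOn (fun x => Real.exp (-θ * x) * f x) (Ioi 0)

noncomputable def laplace (f : ℝ → ℝ) (θ : ℝ) : ℝ :=
  ∫ x in Ioi (0:ℝ), Real.exp (-θ * x) * f x

theorem LaplaceIntegrable.const_mul {f : ℝ → ℝ} {θ : ℝ} (hf : LaplaceIntegrable f θ) (c : ℝ) :
    LaplaceIntegrable (fun x => c * f x) θ := by
  unfold LaplaceIntegrable at hf ⊢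
  simp only [mul_left_comm _ c]
  exact hf.const_mul c

theorem LaplaceIntegrable.sub {f g : ℝ → ℝ} {θ : ℝ} (hf : LaplaceIntegrable f θ)
    (hg : LaplaceIntegrable g θ) : LaplaceIntegrable (fun x => f x - g x) θ := by
  unfold LaplaceIntegrable at hf hg ⊢
  simp only [mul_sub]
  exact hf.sub hg

theorem laplace_const_mul (f : ℝ → ℝ) (θ c : ℝ) :
    laplace (fun x => c * f x) θ = c * laplace f θ := by
  simp only [laplace, mul_left_comm _ c, integral_const_mul]

theorem laplace_sub {f g : ℝ → ℝ} {θ : ℝ} (hf : LaplaceIntegrable f θ)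
    (hg : LaplaceIntegrable g θ) : laplace (fun x => f x - g x) θ = laplace f θ - laplace g θ := by
  simp only [laplace, mul_sub]
  exact integral_sub hf hg

noncomputable def causalConv (f g : ℝ → ℝ) (x : ℝ) : ℝ :=
  ∫ y in (0:ℝ)..x, f (x - y) * g y

noncomputable def damped (θ : ℝ) (f : ℝ → ℝ) : ℝ → ℝ :=
  (Ioi 0).indicator fun x => Real.exp (-θ * x) * f x

theorem integrable_damped_iff {f : ℝ → ℝ} {θ : ℝ} :
    Integrable (damped θ f) ↔ LaplaceIntegrable f θ :=
  integrable_indicator_iff measurableSet_Ioi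

theorem integral_damped (f : ℝ → ℝ) (θ : ℝ) : ∫ x, damped θ f x = laplace f θ :=
  integral_indicator measurableSet_Ioi

theorem damped_mul_damped_sub (f g : ℝ → ℝ) (θ x t : ℝ) :
    damped θ g t * damped θ f (x - t) =
      (Ioo 0 x).indicator (fun t => Real.exp (-θ * x) * (f (x - t) * g t)) t := by
  have hexp : Real.exp (-θ * t) * Real.exp (-θ * (x - t)) = Real.exp (-θ * x) := by
    rw [← Real.exp_add]; ring_nf
  simp only [damped, indicator_apply, mem_Ioi, mem_Ioo, sub_pos]
  split_ifs <;> first | linear_combination (f (x - t) * g t) * hexp | simp_all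

theorem convolution_damped (f g : ℝ → ℝ) (θ : ℝ) :
    damped θ g ⋆[ContinuousLinearMap.mul ℝ ℝ] damped θ f = damped θ (causalConv f g) := by
  ext x
  simp only [convolution_def, ContinuousLinearMap.mul_apply', damped_mul_damped_sub,
    integral_indicator measurableSet_Ioo, integral_const_mul]
  rcases le_or_gt x 0 with hx | hx
  · simp [damped, hx.not_gt]
  · rw [damped, indicator_of_mem (mem_Ioi.2 hx), causalConv,
      intervalIntegral.integral_of_le hx.le, integral_Ioc_eq_integral_Ioo]

theorem laplaceIntegrable_causalConv {f g : ℝ → ℝ} {θ : ℝ} (hf : LaplaceIntegrable f θ)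
    (hg : LaplaceIntegrable g θ) : LaplaceIntegrable (causalConv f g) θ := by
  rw [← integrable_damped_iff, ← convolution_damped]
  exact (integrable_damped_iff.2 hg).integrable_convolution _ (integrable_damped_iff.2 hf)

theorem laplace_causalConv {f g : ℝ → ℝ} {θ : ℝ} (hf : LaplaceIntegrable f θ)
    (hg : LaplaceIntegrable g θ) : laplace (causalConv f g) θ = laplace f θ * laplace g θ := by
  rw [← integral_damped, ← convolution_damped,
    integral_convolution _ (integrable_damped_iff.2 hg) (integrable_damped_iff.2 hf),
    integral_damped, integral_damped, ContinuousLinearMap.mul_apply', mul_comm]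

theorem ContinuousOn.continuous_comp_max {f : ℝ → ℝ} {a : ℝ} (hf : ContinuousOn f (Ici a)) :
    Continuous fun x => f (max x a) :=
  hf.comp_continuous (continuous_id.max continuous_const) fun x => le_max_right x a

theorem causalConv_congr {f g f' g' : ℝ → ℝ} (hf : EqOn f f' (Ici 0)) (hg : EqOn g g' (Ici 0))
    {x : ℝ} (hx : 0 ≤ x) : causalConv f g x = causalConv f' g' x := by
  refine intervalIntegral.integral_congr fun y hy => ?_
  rw [uIcc_of_le hx] at hy
  simp only [hf (sub_nonneg.2 hy.2 : x - y ∈ Ici 0), hg (hy.1 : y ∈ Ici 0)]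

theorem continuousOn_causalConv {f g : ℝ → ℝ} (hf : ContinuousOn f (Ici 0))
    (hg : ContinuousOn g (Ici 0)) : ContinuousOn (causalConv f g) (Ici 0) := by
  have hF := hf.continuous_comp_max
  have hG := hg.continuous_comp_max
  have hcont : Continuous (causalConv (fun x => f (max x 0)) fun x => g (max x 0)) :=
    intervalIntegral.continuous_parametric_intervalIntegral_of_continuous
      ((hF.comp (continuous_fst.sub continuous_snd)).mul (hG.comp continuous_snd)) continuous_id
  refine hcont.continuousOn.congr fun x hx => causalConv_congr ?_ ?_ hx <;>
    exact fun y hy => by simp [max_eq_left (mem_Ici.1 hy)]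

theorem exp_neg_mem_Icc {x : ℝ} (hx : 0 ≤ x) : Real.exp (-x) ∈ Icc (0:ℝ) 1 :=
  ⟨(Real.exp_pos _).le, Real.exp_le_one_iff.2 (neg_nonpos.2 hx)⟩

theorem integrableOn_comp_exp_neg_mul {u w : ℝ → ℝ} (hu : ContinuousOn u (Icc 0 1))
    (hw : IntegrableOn w (Ioi 0)) : IntegrableOn (fun x => u (Real.exp (-x)) * w x) (Ioi 0) := by
  have hmaps : MapsTo (fun x => Real.exp (-x)) (Ioi 0) (Icc 0 1) := fun x hx =>
    exp_neg_mem_Icc (le_of_lt hx)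
  obtain ⟨C, hC⟩ := isCompact_Icc.exists_bound_of_continuousOn hu
  refine hw.bdd_mul ((hu.comp (by fun_prop) hmaps).aestronglyMeasurable measurableSet_Ioi)
    ((ae_restrict_iff' measurableSet_Ioi).2 (Eventually.of_forall fun x hx => hC _ (hmaps hx)))

theorem integral_eval_exp_neg_mul_eq_zero {w : ℝ → ℝ} (hw : IntegrableOn w (Ioi 0))
    (hmom : ∀ n : ℕ, ∫ x in Ioi (0:ℝ), Real.exp (-x) ^ n * w x = 0) (P : ℝ[X]) :
    ∫ x in Ioi (0:ℝ), P.eval (Real.exp (-x)) * w x = 0 := by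
  induction P using Polynomial.induction_on' with
  | add P Q hP hQ =>
    simp only [eval_add, add_mul]
    rw [integral_add (integrableOn_comp_exp_neg_mul P.continuousOn hw)
      (integrableOn_comp_exp_neg_mul Q.continuousOn hw), hP, hQ, add_zero]
  | monomial n a =>
    simp only [eval_monomial, mul_assoc]
    rw [integral_const_mul, hmom, mul_zero]

theorem integral_comp_exp_neg_mul_eq_zero {w : ℝ → ℝ} (hw : IntegrableOn w (Ioi 0))
    (hmom : ∀ n : ℕ, ∫ x in Ioi (0:ℝ), Real.exp (-x) ^ n * w x = 0) {u : ℝ → ℝ}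
    (hu : ContinuousOn u (Icc 0 1)) :
    ∫ x in Ioi (0:ℝ), u (Real.exp (-x)) * w x = 0 := by
  set M := ∫ x in Ioi (0:ℝ), ‖w x‖
  have hM : 0 ≤ M := setIntegral_nonneg measurableSet_Ioi fun x _ => norm_nonneg _
  refine eq_of_forall_dist_le fun ε hε => ?_
  obtain ⟨P, hP⟩ := exists_polynomial_near_of_continuousOn 0 1 u hu (ε / (M + 1)) (by positivity)
  have hbound : ∀ᵐ x ∂volume.restrict (Ioi 0),
      ‖(u (Real.exp (-x)) - P.eval (Real.exp (-x))) * w x‖ ≤ ε / (M + 1) * ‖w x‖ := by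
    refine (ae_restrict_iff' measurableSet_Ioi).2 (Eventually.of_forall fun x hx => ?_)
    rw [norm_mul, Real.norm_eq_abs, abs_sub_comm]
    exact mul_le_mul_of_nonneg_right (hP _ (exp_neg_mem_Icc (le_of_lt hx))).le (norm_nonneg _)
  calc dist (∫ x in Ioi (0:ℝ), u (Real.exp (-x)) * w x) 0
      = ‖∫ x in Ioi (0:ℝ), (u (Real.exp (-x)) - P.eval (Real.exp (-x))) * w x‖ := by
        simp only [sub_mul]
        rw [integral_sub (integrableOn_comp_exp_neg_mul hu hw)
          (integrableOn_comp_exp_neg_mul P.continuousOn hw),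
          integral_eval_exp_neg_mul_eq_zero hw hmom, sub_zero, dist_zero_right]
    _ ≤ ∫ x in Ioi (0:ℝ), ε / (M + 1) * ‖w x‖ :=
        norm_integral_le_of_norm_le (hw.norm.const_mul _) hbound
    _ = ε / (M + 1) * M := integral_const_mul _ _
    _ ≤ ε := by
        rw [div_mul_eq_mul_div, div_le_iff₀ (by positivity)]
        exact mul_le_mul_of_nonneg_left (by linarith) hε.le

theorem continuous_comp_neg_log {g : ℝ → ℝ} (hg : Continuous g) (hgc : HasCompactSupport g)
    (hg0 : g 0 = 0) : Continuous fun t => g (-Real.log t) := by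
  refine continuous_iff_continuousAt.2 fun t => ?_
  rcases eq_or_ne t 0 with rfl | ht
  -- `Real.log 0 = 0`, so the value at `0` is `g 0`
  · rw [← continuousWithinAt_compl_self, ContinuousWithinAt, Real.log_zero, neg_zero, hg0]
    exact (hgc.is_zero_at_infty.mono_left atTop_le_cocompact).comp
      (tendsto_neg_atBot_atTop.comp Real.tendsto_log_nhdsNE_zero)
  · exact hg.continuousAt.comp (Real.continuousAt_log ht).neg

theorem eqOn_zero_of_integral_comp_exp_neg_mul_eq_zero {w : ℝ → ℝ} (hw : ContinuousOn w (Ioi 0))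
    (h : ∀ u : ℝ → ℝ, ContinuousOn u (Icc 0 1) →
      ∫ x in Ioi (0:ℝ), u (Real.exp (-x)) * w x = 0) :
    EqOn w 0 (Ioi 0) := by
  have hae : ∀ᵐ x, x ∈ Ioi (0:ℝ) → w x = 0 :=
    isOpen_Ioi.ae_eq_zero_of_integral_contDiff_smul_eq_zero (hw.locallyIntegrableOn
      measurableSet_Ioi) fun g hg hgc hgU => ?_
  · exact Measure.eqOn_open_of_ae_eq ((ae_restrict_iff' measurableSet_Ioi).2 hae) isOpen_Ioi hw
      continuousOn_const
  have hg_out : ∀ x ∉ Ioi (0:ℝ), g x = 0 := fun x hx =>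
    image_eq_zero_of_notMem_tsupport fun h => hx (hgU h)
  have hu := continuous_comp_neg_log hg.continuous hgc (hg_out 0 self_notMem_Ioi)
  rw [← setIntegral_eq_integral_of_forall_compl_eq_zero fun x hx => by simp [hg_out x hx],
    ← h _ hu.continuousOn]
  refine setIntegral_congr_fun measurableSet_Ioi fun x _ => ?_
  simp [Real.log_exp]

theorem eqOn_zero_of_laplace_eq_zero {k : ℝ → ℝ} {θ₀ : ℝ} (hk : ContinuousOn k (Ici 0))
    (hint : ∀ θ > θ₀, LaplaceIntegrable k θ) (hzero : ∀ θ > θ₀, laplace k θ = 0) :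
    EqOn k 0 (Ici 0) := by
  set θ₁ := θ₀ + 1
  set w : ℝ → ℝ := fun x => Real.exp (-θ₁ * x) * k x
  have hshift (n : ℕ) (x : ℝ) : Real.exp (-x) ^ n * w x = Real.exp (-(θ₁ + n) * x) * k x := by
    rw [← Real.exp_nat_mul, ← mul_assoc, ← Real.exp_add]
    ring_nf
  have hmom (n : ℕ) : ∫ x in Ioi (0:ℝ), Real.exp (-x) ^ n * w x = 0 := by
    simp_rw [hshift]
    exact hzero _ (by linarith [(n.cast_nonneg : (0:ℝ) ≤ n)])
  have hw : EqOn w 0 (Ioi 0) :=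
    eqOn_zero_of_integral_comp_exp_neg_mul_eq_zero
      ((Real.continuous_exp.comp (continuous_const_mul (-θ₁))).continuousOn.mul
        (hk.mono Ioi_subset_Ici_self))
      fun u hu => integral_comp_exp_neg_mul_eq_zero (hint θ₁ (lt_add_one θ₀)) hmom hu
  refine EqOn.of_subset_closure (fun x hx => ?_) hk continuousOn_const Ioi_subset_Ici_self
    (closure_Ioi (0:ℝ)).ge
  simpa [w, (Real.exp_pos _).ne'] using hw hx

theorem stmt0_general (p r : ℝ) (hpr : p ≠ r) (f g : ℝ → ℝ)
    (hf : ContinuousOn f (Ici 0)) (hg : ContinuousOn g (Ici 0))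
    (θ₀ : ℝ)
    (hfint : ∀ θ > θ₀, IntegrableOn (fun x => Real.exp (-θ * x) * f x) (Ioi 0))
    (hgint : ∀ θ > θ₀, IntegrableOn (fun x => Real.exp (-θ * x) * g x) (Ioi 0))
    (hLap : ∀ θ > θ₀,
      (r - p) * (∫ x in Ioi (0:ℝ), Real.exp (-θ * x) * f x) *
        (∫ x in Ioi (0:ℝ), Real.exp (-θ * x) * g x) =
      (∫ x in Ioi (0:ℝ), Real.exp (-θ * x) * g x) -
        (∫ x in Ioi (0:ℝ), Real.exp (-θ * x) * f x)) :
    ∀ x ≥ (0:ℝ), (∫ y in (0:ℝ)..x, f (x - y) * g y) = (g x - f x) / (r - p) := by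
  have hfL : ∀ θ > θ₀, LaplaceIntegrable f θ := hfint
  have hgL : ∀ θ > θ₀, LaplaceIntegrable g θ := hgint
  set k : ℝ → ℝ := fun x => (r - p) * causalConv f g x - (g x - f x)
  have hk : ContinuousOn k (Ici 0) :=
    (continuousOn_const.mul (continuousOn_causalConv hf hg)).sub (hg.sub hf)
  have hkint (θ) (hθ : θ > θ₀) : LaplaceIntegrable k θ :=
    ((laplaceIntegrable_causalConv (hfL θ hθ) (hgL θ hθ)).const_mul _).sub
      ((hgL θ hθ).sub (hfL θ hθ))
  have hkzero (θ) (hθ : θ > θ₀) : laplace k θ = 0 := by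
    have hconv := laplaceIntegrable_causalConv (hfL θ hθ) (hgL θ hθ)
    rw [laplace_sub (hconv.const_mul _) ((hgL θ hθ).sub (hfL θ hθ)), laplace_const_mul,
      laplace_causalConv (hfL θ hθ) (hgL θ hθ), laplace_sub (hgL θ hθ) (hfL θ hθ),
      ← mul_assoc, sub_eq_zero]
    exact hLap θ hθ
  intro x hx
  have hkx : k x = 0 := eqOn_zero_of_laplace_eq_zero hk hkint hkzero hx
  show causalConv f g x = _
  rw [eq_div_iff (sub_ne_zero.2 hpr.symm)]
  linear_combination hkx

/-- abstract Laplace-transform form of the scale-function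
convolution identity `∫_0^x f(x-y) g(y) dy = (g(x) - f(x))/(r - p)`. -/
theorem stmt0 (p r : ℝ) (hpr : p ≠ r) (f g : ℝ → ℝ)
    (hf : ContinuousOn f (Ici 0)) (hg : ContinuousOn g (Ici 0))
    (θ₀ : ℝ) (hθ₀ : 0 ≤ θ₀)
    (hfint : ∀ θ > θ₀, IntegrableOn (fun x => Real.exp (-θ * x) * f x) (Ioi 0))
    (hgint : ∀ θ > θ₀, IntegrableOn (fun x => Real.exp (-θ * x) * g x) (Ioi 0))
    (hLap : ∀ θ > θ₀,
      (r - p) * (∫ x in Ioi (0:ℝ), Real.exp (-θ * x) * f x) *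
        (∫ x in Ioi (0:ℝ), Real.exp (-θ * x) * g x) =
      (∫ x in Ioi (0:ℝ), Real.exp (-θ * x) * g x) -
        (∫ x in Ioi (0:ℝ), Real.exp (-θ * x) * f x)) :
    ∀ x ≥ (0:ℝ), (∫ y in (0:ℝ)..x, f (x - y) * g y) = (g x - f x) / (r - p) :=
  stmt0_general p r hpr f g hf hg θ₀ hfint hgint hLap
end

section
/- Let p, r, s be real numbers with p ≠ r, s ≠ p, s ≠ r, and let λ > 0. Let f, g : ℝ → ℝ vanish on (−∞,0) and be continuous on [0,∞), and assume: (i) for all x ≥ 0, ∫_0^x f(x−y) g(y) dy = (g(x) − f(x))/(r − p); (ii) ∫_0^∞ e^{−λy} g(y) dy = 1/(s − r); and (iii) for every x ≥ 0 the integrals ∫_0^∞ e^{−λz} |f(x+z)| dz and ∫_0^∞ e^{−λz} |g(x+z)| dz are finite. Define Z_p(x) = (s − p) ∫_0^∞ e^{−λz} f(x+z) dz and Z_r(x) = (s − r) ∫_0^∞ e^{−λz} g(x+z) dz for x ∈ ℝ. Then for all x ≥ 0, ∫_0^x f(x−y) Z_r(y) dy = (Z_r(x) − Z_p(x))/(r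 − p). -/
open MeasureTheory Set

/-! Write `T h a = ∫_0^∞ e^{-λz} h(a+z) dz` (`tailLaplace`), so that `Z_p = (s-p) T f` and
`Z_r = (s-r) T g`. Multiply the convolution identity (i) at `x + z` by `e^{-λz}` and
integrate over `z > 0`: the result is `(T g x - T f x)/(r-p)`. Since `g` vanishes on
`(-∞,0)`, this double integral is the integral of `f w e^{-λz} g(x-w+z)` over the quadrant
`w, z > 0`. Integrating first in `z` instead gives `f w · T g (x-w)`; for `w > x` this is
`f w e^{λ(x-w)} T g 0` by the same vanishing, and `T g 0 = 1/(s-r)` by (ii). So the part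
`w ≤ x` is the claimed left-hand side divided by `s-r`, and the part `w > x` is
`T f x/(s-r)`. Fubini applies because `f` is bounded on `[0,x]` and
`T |g| a ≤ e^{λa} T |g| 0` for `a ≥ 0`. -/

section Shift

variable {E : Type*} [NormedAddCommGroup E]

theorem setIntegral_Ioi_comp_const_add [NormedSpace ℝ E] (h : ℝ → E) (a : ℝ) :
    ∫ z in Ioi 0, h (a + z) = ∫ u in Ioi a, h u := by
  have := (measurePreserving_add_left volume a).setIntegral_preimage_emb
    (Homeomorph.addLeft a).measurableEmbedding h (Ioi a)
  simpa using this

theorem integrableOn_Ioi_comp_const_add_iff (h : ℝ → E) (a : ℝ) :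
    IntegrableOn (fun z => h (a + z)) (Ioi 0) ↔ IntegrableOn h (Ioi a) := by
  have := (measurePreserving_add_left volume a).integrableOn_comp_preimage
    (Homeomorph.addLeft a).measurableEmbedding (f := h) (s := Ioi a)
  simpa [Function.comp_def] using this

end Shift

theorem measurable_of_continuousOn_Ici_of_eq_zero {f : ℝ → ℝ} (hf0 : ∀ x < 0, f x = 0)
    (hfc : ContinuousOn f (Ici 0)) : Measurable f := by
  classical
  have hpw : (Ici 0).piecewise f 0 = f := by
    ext x
    by_cases hx : x ∈ Ici (0:ℝ)
    · simp [hx]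
    · simp [hx, hf0 x (not_le.mp hx)]
  rw [← hpw]
  exact hfc.measurable_piecewise continuousOn_const measurableSet_Ici

theorem setIntegral_Ioi_mul_comp_sub {f g : ℝ → ℝ} (hg0 : ∀ u < 0, g u = 0) {c : ℝ}
    (hc : 0 ≤ c) : ∫ w in Ioi 0, f w * g (c - w) = ∫ y in 0..c, f (c - y) * g y := by
  rw [setIntegral_eq_of_subset_of_forall_sdiff_eq_zero measurableSet_Ioi Ioc_subset_Ioi_self
      fun w hw => ?_, ← intervalIntegral.integral_of_le hc]
  · simpa using (intervalIntegral.integral_comp_sub_left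
      (fun y => f (c - y) * g y) c (a := 0) (b := c))
  · rw [hg0 _ (by linarith [not_le.mp fun h => hw.2 ⟨hw.1, h⟩]), mul_zero]

noncomputable def tailLaplace (lam : ℝ) (h : ℝ → ℝ) (a : ℝ) : ℝ :=
  ∫ z in Ioi 0, Real.exp (-lam * z) * h (a + z)

namespace tailLaplace

variable {lam : ℝ} {h : ℝ → ℝ} {a : ℝ}

theorem exp_mul_comp_const_add (lam a : ℝ) (h : ℝ → ℝ) :
    (fun z => Real.exp (-lam * z) * h (a + z)) =
      fun z => Real.exp (lam * a) * (Real.exp (-lam * (a + z)) * h (a + z)) := by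
  ext z
  rw [← mul_assoc, ← Real.exp_add]
  ring_nf

theorem eq_exp_mul_setIntegral_Ioi (lam : ℝ) (h : ℝ → ℝ) (a : ℝ) :
    tailLaplace lam h a = Real.exp (lam * a) * ∫ u in Ioi a, Real.exp (-lam * u) * h u := by
  rw [tailLaplace, exp_mul_comp_const_add, integral_const_mul,
    setIntegral_Ioi_comp_const_add (fun u => Real.exp (-lam * u) * h u)]

theorem integrableOn_iff (lam : ℝ) (h : ℝ → ℝ) (a : ℝ) :
    IntegrableOn (fun z => Real.exp (-lam * z) * h (a + z)) (Ioi 0) ↔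
      IntegrableOn (fun u => Real.exp (-lam * u) * h u) (Ioi a) := by
  rw [exp_mul_comp_const_add,
    ← integrableOn_Ioi_comp_const_add_iff (fun u => Real.exp (-lam * u) * h u)]
  exact integrable_const_mul_iff (Real.exp_pos _).ne'.isUnit _

theorem setIntegral_Ioi_eq_of_nonpos (hh0 : ∀ u < 0, h u = 0) (ha : a ≤ 0) :
    ∫ u in Ioi a, Real.exp (-lam * u) * h u = ∫ u in Ioi 0, Real.exp (-lam * u) * h u := by
  rcases ha.lt_or_eq with ha | rfl
  · rw [← integral_Ici_eq_integral_Ioi (x := 0)]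
    refine setIntegral_eq_of_subset_of_forall_sdiff_eq_zero measurableSet_Ioi
      (Ici_subset_Ioi.mpr ha) fun u hu => ?_
    rw [hh0 u (not_le.mp hu.2), mul_zero]
  · rfl

theorem zero_eq (lam : ℝ) (h : ℝ → ℝ) :
    tailLaplace lam h 0 = ∫ u in Ioi 0, Real.exp (-lam * u) * h u := by
  simp only [tailLaplace, zero_add]

theorem of_nonpos (hh0 : ∀ u < 0, h u = 0) (ha : a ≤ 0) :
    tailLaplace lam h a = Real.exp (lam * a) * tailLaplace lam h 0 := by
  rw [eq_exp_mul_setIntegral_Ioi, setIntegral_Ioi_eq_of_nonpos hh0 ha, zero_eq]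

theorem integrableOn_of_nonpos (hh0 : ∀ u < 0, h u = 0) (ha : a ≤ 0)
    (hint : IntegrableOn (fun u => Real.exp (-lam * u) * h u) (Ioi 0)) :
    IntegrableOn (fun z => Real.exp (-lam * z) * h (a + z)) (Ioi 0) := by
  rw [integrableOn_iff]
  rcases ha.lt_or_eq with ha | rfl
  · refine ((integrableOn_Ici_iff_integrableOn_Ioi).mpr hint).of_forall_sdiff_eq_zero
      measurableSet_Ioi fun u hu => ?_
    rw [hh0 u (not_le.mp hu.2), mul_zero]
  · exact hint

theorem le_of_nonneg (hh : ∀ u, 0 ≤ h u)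
    (hint : IntegrableOn (fun u => Real.exp (-lam * u) * h u) (Ioi 0)) (ha : 0 ≤ a) :
    tailLaplace lam h a ≤ Real.exp (lam * a) * tailLaplace lam h 0 := by
  rw [eq_exp_mul_setIntegral_Ioi, zero_eq]
  refine mul_le_mul_of_nonneg_left ?_ (Real.exp_pos _).le
  exact setIntegral_mono_set hint (.of_forall fun u => mul_nonneg (Real.exp_pos _).le (hh u))
    (Ioi_subset_Ioi ha).eventuallyLE

theorem integrableOn_of_abs (hh : Measurable h)
    (hint : IntegrableOn (fun z => Real.exp (-lam * z) * |h (a + z)|) (Ioi 0)) :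
    IntegrableOn (fun z => Real.exp (-lam * z) * h (a + z)) (Ioi 0) := by
  refine (integrable_norm_iff (by fun_prop)).mp (hint.congr (.of_forall fun z => ?_))
  simp only [norm_mul, Real.norm_eq_abs, abs_of_pos (Real.exp_pos _)]

theorem nonneg (hh : ∀ u, 0 ≤ h u) : 0 ≤ tailLaplace lam h a :=
  integral_nonneg fun _ => mul_nonneg (Real.exp_pos _).le (hh _)

theorem sub {f g : ℝ → ℝ}
    (hf : IntegrableOn (fun z => Real.exp (-lam * z) * f (a + z)) (Ioi 0))
    (hg : IntegrableOn (fun z => Real.exp (-lam * z) * g (a + z)) (Ioi 0)) :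
    tailLaplace lam (fun u => f u - g u) a = tailLaplace lam f a - tailLaplace lam g a := by
  simp only [tailLaplace, mul_sub]
  exact integral_sub hf hg

theorem div_const (h : ℝ → ℝ) (d : ℝ) :
    tailLaplace lam (fun u => h u / d) a = tailLaplace lam h a / d := by
  simp only [tailLaplace, mul_div_assoc', integral_div]

theorem measurable (hh : Measurable h) :
    Measurable (tailLaplace lam h) :=
  (show Measurable fun q : ℝ × ℝ => Real.exp (-lam * q.2) * h (q.1 + q.2) by fun_prop)
    |>.stronglyMeasurable.integral_prod_right' |>.measurable

end tailLaplace

noncomputable def tailKernel (lam x : ℝ) (f g : ℝ → ℝ) (q : ℝ × ℝ) : ℝ :=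
  f q.1 * (Real.exp (-lam * q.2) * g (x - q.1 + q.2))

section tailKernel

variable {lam x : ℝ} {f g : ℝ → ℝ}

theorem integral_norm_tailKernel (w : ℝ) :
    ∫ z in Ioi 0, ‖tailKernel lam x f g (w, z)‖ =
      |f w| * tailLaplace lam (fun u => |g u|) (x - w) := by
  simp only [tailKernel, tailLaplace, norm_mul, Real.norm_eq_abs,
    abs_of_pos (Real.exp_pos _), integral_const_mul]

theorem integrableOn_abs_mul_tailLaplace_abs (hx : 0 ≤ x) (hfm : Measurable f)
    (hgm : Measurable g) (hg0 : ∀ u < 0, g u = 0) (hfc : ContinuousOn f (Icc 0 x))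
    (hfint : IntegrableOn (fun z => Real.exp (-lam * z) * |f (x + z)|) (Ioi 0))
    (hgint : IntegrableOn (fun u => Real.exp (-lam * u) * |g u|) (Ioi 0)) :
    IntegrableOn (fun w => |f w| * tailLaplace lam (fun u => |g u|) (x - w)) (Ioi 0) := by
  obtain ⟨M, hM⟩ := isCompact_Icc.exists_bound_of_continuousOn hfc
  set C := tailLaplace lam (fun u => |g u|) 0
  have hT0 : ∀ a, 0 ≤ tailLaplace lam (fun u => |g u|) a :=
    fun a => tailLaplace.nonneg fun u => abs_nonneg _
  have hm : Measurable fun w => |f w| * tailLaplace lam (fun u => |g u|) (x - w) :=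
    hfm.abs.mul ((tailLaplace.measurable hgm.abs).comp (measurable_const.sub measurable_id))
  rw [← Ioc_union_Ioi_eq_Ioi hx]
  refine IntegrableOn.union ?_ ?_
  · refine Measure.integrableOn_of_bounded (M := M * (Real.exp (|lam| * x) * C))
      measure_Ioc_lt_top.ne hm.aestronglyMeasurable ?_
    filter_upwards [ae_restrict_mem measurableSet_Ioc] with w ⟨hw0, hwx⟩
    have hexp : lam * (x - w) ≤ |lam| * x := by
      nlinarith [le_abs_self lam, abs_nonneg lam]
    have hT : tailLaplace lam (fun u => |g u|) (x - w) ≤ Real.exp (|lam| * x) * C :=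
      (tailLaplace.le_of_nonneg (fun u => abs_nonneg _) hgint (by linarith)).trans
        (mul_le_mul_of_nonneg_right (Real.exp_le_exp.mpr hexp) (hT0 0))
    have hfw : |f w| ≤ M := hM w ⟨hw0.le, hwx⟩
    rw [Real.norm_eq_abs, abs_of_nonneg (mul_nonneg (abs_nonneg _) (hT0 _))]
    exact mul_le_mul hfw hT (hT0 _) ((abs_nonneg _).trans hfw)
  · refine IntegrableOn.congr_fun (((tailLaplace.integrableOn_iff lam (fun u => |f u|) x).mp
      hfint).const_mul (Real.exp (lam * x) * C)) (fun w hw => ?_) measurableSet_Ioi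
    have habs0 : ∀ u < 0, |g u| = 0 := fun u hu => by rw [hg0 u hu, abs_zero]
    rw [tailLaplace.of_nonpos habs0 (by linarith [mem_Ioi.mp hw]),
      show lam * (x - w) = lam * x + -lam * w by ring, Real.exp_add]
    ring

theorem integrable_tailKernel (hx : 0 ≤ x) (hfm : Measurable f) (hgm : Measurable g)
    (hg0 : ∀ u < 0, g u = 0) (hfc : ContinuousOn f (Icc 0 x))
    (hfint : IntegrableOn (fun z => Real.exp (-lam * z) * |f (x + z)|) (Ioi 0))
    (hgint : ∀ a ≥ 0, IntegrableOn (fun z => Real.exp (-lam * z) * |g (a + z)|) (Ioi 0)) :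
    Integrable (tailKernel lam x f g)
      ((volume.restrict (Ioi 0)).prod (volume.restrict (Ioi 0))) := by
  have hm : AEStronglyMeasurable (tailKernel lam x f g)
      ((volume.restrict (Ioi 0)).prod (volume.restrict (Ioi 0))) := by
    unfold tailKernel; fun_prop
  have hgint0 : IntegrableOn (fun u => Real.exp (-lam * u) * |g u|) (Ioi 0) := by
    simpa using hgint 0 le_rfl
  have hgI : ∀ a, IntegrableOn (fun z => Real.exp (-lam * z) * g (a + z)) (Ioi 0) := by
    intro a
    refine tailLaplace.integrableOn_of_abs hgm ?_
    rcases le_total 0 a with ha | ha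
    · exact hgint a ha
    · exact tailLaplace.integrableOn_of_nonpos (fun u hu => by rw [hg0 u hu, abs_zero]) ha hgint0
  refine (integrable_prod_iff hm).mpr ⟨.of_forall fun w => (hgI (x - w)).const_mul (f w), ?_⟩
  simp only [integral_norm_tailKernel]
  exact integrableOn_abs_mul_tailLaplace_abs hx hfm hgm hg0 hfc hfint hgint0

theorem integral_integral_tailKernel (hx : 0 ≤ x) (hg0 : ∀ u < 0, g u = 0)
    (hK : Integrable (tailKernel lam x f g)
      ((volume.restrict (Ioi 0)).prod (volume.restrict (Ioi 0)))) :
    ∫ w in Ioi 0, ∫ z in Ioi 0, tailKernel lam x f g (w, z) =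
      (∫ y in 0..x, f (x - y) * tailLaplace lam g y) +
        tailLaplace lam g 0 * tailLaplace lam f x := by
  have hinner : ∀ w,
      ∫ z in Ioi 0, tailKernel lam x f g (w, z) = f w * tailLaplace lam g (x - w) :=
    fun w => integral_const_mul (f w) fun z => Real.exp (-lam * z) * g (x - w + z)
  have hint : IntegrableOn (fun w => f w * tailLaplace lam g (x - w)) (Ioi 0) := by
    have := hK.integral_prod_left
    simp only [hinner] at this
    exact this
  simp only [hinner]
  rw [← Ioc_union_Ioi_eq_Ioi hx, setIntegral_union Ioc_disjoint_Ioi_same measurableSet_Ioi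
    (hint.mono_set Ioc_subset_Ioi_self) (hint.mono_set (Ioi_subset_Ioi hx))]
  congr 1
  · rw [← intervalIntegral.integral_of_le hx]
    simpa using (intervalIntegral.integral_comp_sub_left
      (fun y => f (x - y) * tailLaplace lam g y) x (a := 0) (b := x))
  · calc ∫ w in Ioi x, f w * tailLaplace lam g (x - w)
        = ∫ w in Ioi x, tailLaplace lam g 0 *
            (Real.exp (lam * x) * (Real.exp (-lam * w) * f w)) := by
          refine setIntegral_congr_fun measurableSet_Ioi fun w hw => ?_
          rw [tailLaplace.of_nonpos hg0 (by linarith [mem_Ioi.mp hw]),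
            show lam * (x - w) = lam * x + -lam * w by ring, Real.exp_add]
          ring
      _ = tailLaplace lam g 0 * tailLaplace lam f x := by
          rw [integral_const_mul, integral_const_mul,
            tailLaplace.eq_exp_mul_setIntegral_Ioi lam f x]

theorem integral_integral_tailKernel_swap (hx : 0 ≤ x) (hg0 : ∀ u < 0, g u = 0)
    (k : ℝ → ℝ) (hconv : ∀ c ≥ 0, ∫ y in 0..c, f (c - y) * g y = k c) :
    ∫ z in Ioi 0, ∫ w in Ioi 0, tailKernel lam x f g (w, z) = tailLaplace lam k x := by
  refine setIntegral_congr_fun measurableSet_Ioi fun z hz => ?_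
  have hxz : 0 ≤ x + z := by linarith [mem_Ioi.mp hz]
  calc ∫ w in Ioi 0, tailKernel lam x f g (w, z)
      = Real.exp (-lam * z) * ∫ w in Ioi 0, f w * g (x + z - w) := by
        rw [← integral_const_mul]
        refine integral_congr_ae (.of_forall fun w => ?_)
        simp only [tailKernel, show x - w + z = x + z - w by ring]
        ring
    _ = Real.exp (-lam * z) * k (x + z) := by
        rw [setIntegral_Ioi_mul_comp_sub hg0 hxz, hconv _ hxz]

end tailKernel

theorem stmt1_general (p r s lam : ℝ) (hpr : p ≠ r) (hsr : s ≠ r)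
    (f g : ℝ → ℝ)
    (hf0 : ∀ x < (0:ℝ), f x = 0) (hg0 : ∀ x < (0:ℝ), g x = 0)
    (hfc : ContinuousOn f (Ici 0)) (hgc : ContinuousOn g (Ici 0))
    (hconv : ∀ x ≥ (0:ℝ), (∫ y in (0:ℝ)..x, f (x - y) * g y) = (g x - f x) / (r - p))
    (hgLap : (∫ y in Ioi (0:ℝ), Real.exp (-lam * y) * g y) = 1 / (s - r))
    (hfint : ∀ x ≥ (0:ℝ), IntegrableOn (fun z => Real.exp (-lam * z) * |f (x + z)|) (Ioi 0))
    (hgint : ∀ x ≥ (0:ℝ), IntegrableOn (fun z => Real.exp (-lam * z) * |g (x + z)|) (Ioi 0)) :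
    ∀ x ≥ (0:ℝ),
      (∫ y in (0:ℝ)..x,
          f (x - y) * ((s - r) * ∫ z in Ioi (0:ℝ), Real.exp (-lam * z) * g (y + z))) =
        (((s - r) * ∫ z in Ioi (0:ℝ), Real.exp (-lam * z) * g (x + z)) -
            ((s - p) * ∫ z in Ioi (0:ℝ), Real.exp (-lam * z) * f (x + z))) / (r - p) := by
  intro x hx
  have hfm := measurable_of_continuousOn_Ici_of_eq_zero hf0 hfc
  have hgm := measurable_of_continuousOn_Ici_of_eq_zero hg0 hgc
  have hK := integrable_tailKernel hx hfm hgm hg0 (hfc.mono Icc_subset_Ici_self) (hfint x hx)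
    hgint
  have hfubini := integral_integral_swap (f := fun w z => tailKernel lam x f g (w, z)) hK
  rw [integral_integral_tailKernel hx hg0 hK, integral_integral_tailKernel_swap hx hg0 _ hconv,
    tailLaplace.div_const, tailLaplace.sub (tailLaplace.integrableOn_of_abs hgm (hgint x hx))
      (tailLaplace.integrableOn_of_abs hfm (hfint x hx)), tailLaplace.zero_eq, hgLap] at hfubini
  have hlhs : (∫ y in (0:ℝ)..x,
          f (x - y) * ((s - r) * ∫ z in Ioi (0:ℝ), Real.exp (-lam * z) * g (y + z))) =
      (s - r) * ∫ y in (0:ℝ)..x, f (x - y) * tailLaplace lam g y := by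
    rw [← intervalIntegral.integral_const_mul]
    exact intervalIntegral.integral_congr fun y _ => by simp only [tailLaplace]; ring
  rw [hlhs]
  change _ = ((s - r) * tailLaplace lam g x - (s - p) * tailLaplace lam f x) / (r - p)
  have hrp : r - p ≠ 0 := sub_ne_zero.mpr hpr.symm
  have hsr' : s - r ≠ 0 := sub_ne_zero.mpr hsr
  field_simp at hfubini ⊢
  linear_combination hfubini

/-- abstract form of the identity
`∫_a^x W_p(x-y) Z_r(y-a;Φ(s)) dy = (Z_r(x-a;Φ(s)) - Z_p(x-a;Φ(s)))/(r-p)`,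
where `Z_p(x) = (s-p) ∫_0^∞ e^{-λ z} f(x+z) dz` and
`Z_r(x) = (s-r) ∫_0^∞ e^{-λ z} g(x+z) dz`. -/
theorem stmt1 (p r s lam : ℝ) (hpr : p ≠ r) (hsp : s ≠ p) (hsr : s ≠ r) (hlam : 0 < lam)
    (f g : ℝ → ℝ)
    (hf0 : ∀ x < (0:ℝ), f x = 0) (hg0 : ∀ x < (0:ℝ), g x = 0)
    (hfc : ContinuousOn f (Ici 0)) (hgc : ContinuousOn g (Ici 0))
    (hconv : ∀ x ≥ (0:ℝ), (∫ y in (0:ℝ)..x, f (x - y) * g y) = (g x - f x) / (r - p))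
    (hgLap : (∫ y in Ioi (0:ℝ), Real.exp (-lam * y) * g y) = 1 / (s - r))
    (hfint : ∀ x ≥ (0:ℝ), IntegrableOn (fun z => Real.exp (-lam * z) * |f (x + z)|) (Ioi 0))
    (hgint : ∀ x ≥ (0:ℝ), IntegrableOn (fun z => Real.exp (-lam * z) * |g (x + z)|) (Ioi 0)) :
    ∀ x ≥ (0:ℝ),
      (∫ y in (0:ℝ)..x,
          f (x - y) * ((s - r) * ∫ z in Ioi (0:ℝ), Real.exp (-lam * z) * g (y + z))) =
        (((s - r) * ∫ z in Ioi (0:ℝ), Real.exp (-lam * z) * g (x + z)) -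
            ((s - p) * ∫ z in Ioi (0:ℝ), Real.exp (-lam * z) * f (x + z))) / (r - p) :=
  stmt1_general p r s lam hpr hsr f g hf0 hg0 hfc hgc hconv hgLap hfint hgint
end

section
/- Let p ≠ φ be real numbers, λ ≥ 0 and a ≤ 0. Let W_p, W_φ : ℝ → ℝ vanish on (−∞,0), be continuous on [0,∞), and satisfy ∫_0^x W_p(x−y) W_φ(y) dy = (W_φ(x) − W_p(x))/(φ − p) for all x ≥ 0. Define Z_p(x) = e^{λx} − (φ − p) ∫_0^x e^{λ(x−y)} W_p(y) dy for x ≥ 0 and Z_p(x) = e^{λx} for x < 0. Let ω : ℝ → ℝ be bounded and measurable, and let H : ℝ → ℝ be a locally bounded measurable function satisfying H(x) = e^{λ(x−a)} + ∫_a^x W_φ(x−y)(ω(y) − φ) H(y) dy for all x ∈ ℝ. Then H(x) = Z_p(x−a) + ∫_a^x W_p(x−y)(ω(y) − p) H(y) dy for all x ∈ ℝ. -/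
/-!
Write `c = (ω - φ) H` and `E y = e^{λ(y-a)}`, so that `H - E` is the Volterra integral of `c`
against `W_φ`. Integrating `H - E` once more against `W_p` and swapping the order of integration
(Fubini) produces the kernel `W_p ⋆ W_φ = (W_φ - W_p)/(φ - p)`, i.e.
`(φ - p) ∫ W_p (H - E) = ∫ W_φ c - ∫ W_p c`. Splitting `(ω - p) H = c + (φ - p)(H - E) + (φ - p) E`
then turns the `W_φ`-equation into the `W_p`-equation, the term `(φ - p) ∫ W_p E` being exactly
what separates `Z_p(x - a)` from `e^{λ(x-a)}`.
-/

open MeasureTheory Set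

def BddOnCompacts {X : Type*} [TopologicalSpace X] (f : X → ℝ) : Prop :=
  ∀ s : Set X, IsCompact s → ∃ C, ∀ x ∈ s, |f x| ≤ C

namespace BddOnCompacts

variable {X Y : Type*} [TopologicalSpace X] [TopologicalSpace Y] {f g : X → ℝ}

theorem mul (hf : BddOnCompacts f) (hg : BddOnCompacts g) : BddOnCompacts (fun x => f x * g x) :=
  fun s hs => by
    obtain ⟨C, hC⟩ := hf s hs
    obtain ⟨D, hD⟩ := hg s hs
    refine ⟨C * D, fun x hx => ?_⟩
    rw [abs_mul]
    exact mul_le_mul (hC x hx) (hD x hx) (abs_nonneg _) ((abs_nonneg _).trans (hC x hx))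

theorem sub (hf : BddOnCompacts f) (hg : BddOnCompacts g) : BddOnCompacts (fun x => f x - g x) :=
  fun s hs => by
    obtain ⟨C, hC⟩ := hf s hs
    obtain ⟨D, hD⟩ := hg s hs
    exact ⟨C + D, fun x hx => (abs_sub _ _).trans (add_le_add (hC x hx) (hD x hx))⟩

theorem comp_continuous {h : Y → ℝ} (hh : BddOnCompacts h) {k : X → Y} (hk : Continuous k) :
    BddOnCompacts (fun x => h (k x)) :=
  fun s hs => by
    obtain ⟨C, hC⟩ := hh (k '' s) (hs.image hk)
    exact ⟨C, fun x hx => hC (k x) (mem_image_of_mem k hx)⟩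

theorem integrableOn_of_isCompact [MeasurableSpace X] [OpensMeasurableSpace X] [T2Space X]
    {μ : Measure X} [IsFiniteMeasureOnCompacts μ] (hf : BddOnCompacts f) (hfm : Measurable f)
    {s : Set X} (hs : IsCompact s) : IntegrableOn f s μ := by
  obtain ⟨C, hC⟩ := hf s hs
  exact Measure.integrableOn_of_bounded hs.measure_lt_top.ne hfm.aestronglyMeasurable
    (ae_restrict_of_forall_mem hs.measurableSet fun x hx => by simpa using hC x hx)

theorem intervalIntegrable {f : ℝ → ℝ} (hf : BddOnCompacts f) (hfm : Measurable f) (a b : ℝ) :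
    IntervalIntegrable f volume a b :=
  (intervalIntegrable_iff').2 (hf.integrableOn_of_isCompact hfm isCompact_uIcc)

end BddOnCompacts

theorem Continuous.bddOnCompacts {X : Type*} [TopologicalSpace X] {f : X → ℝ}
    (hf : Continuous f) : BddOnCompacts f :=
  fun _ hs => by simpa using hs.exists_bound_of_continuousOn hf.continuousOn

section CausalKernel

variable {W : ℝ → ℝ}

theorem measurable_of_continuousOn_Ici (h0 : ∀ x < 0, W x = 0) (hc : ContinuousOn W (Ici 0)) :
    Measurable W := by
  classical
  have hW : (Ici (0 : ℝ)).piecewise W (fun _ => 0) = W := by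
    funext x
    by_cases hx : 0 ≤ x
    · simp [hx]
    · simp [hx, h0 x (not_le.1 hx)]
  exact hW ▸ hc.measurable_piecewise continuousOn_const measurableSet_Ici

theorem bddOnCompacts_of_continuousOn_Ici (h0 : ∀ x < 0, W x = 0)
    (hc : ContinuousOn W (Ici 0)) : BddOnCompacts W := fun s hs => by
  obtain ⟨C, hC⟩ := (hs.inter_right isClosed_Ici).exists_bound_of_continuousOn
    (hc.mono inter_subset_right)
  refine ⟨max C 0, fun x hx => ?_⟩
  rcases lt_or_ge x 0 with hneg | hnonneg
  · simp [h0 x hneg]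
  · exact le_max_of_le_left (by simpa using hC x ⟨hx, hnonneg⟩)

end CausalKernel

section SplitIntegral

variable {f : ℝ → ℝ} {a m b : ℝ}

theorem integral_eq_integral_of_forall_lt_eq_zero (ham : a ≤ m) (hmb : m ≤ b)
    (hf : IntervalIntegrable f volume a b) (h0 : ∀ t < m, f t = 0) :
    ∫ t in a..b, f t = ∫ t in m..b, f t := by
  have hm : m ∈ uIcc a b := mem_uIcc_of_le ham hmb
  have hzero : ∫ t in a..m, f t = 0 := by
    rw [intervalIntegral.integral_of_le ham, integral_Ioc_eq_integral_Ioo]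
    exact setIntegral_eq_zero_of_forall_eq_zero fun t ht => h0 t ht.2
  rw [← intervalIntegral.integral_add_adjacent_intervals
    (hf.mono_set (uIcc_subset_uIcc left_mem_uIcc hm))
    (hf.mono_set (uIcc_subset_uIcc hm right_mem_uIcc)), hzero, zero_add]

theorem integral_eq_integral_of_forall_gt_eq_zero (ham : a ≤ m) (hmb : m ≤ b)
    (hf : IntervalIntegrable f volume a b) (h0 : ∀ t > m, f t = 0) :
    ∫ t in a..b, f t = ∫ t in a..m, f t := by
  have hm : m ∈ uIcc a b := mem_uIcc_of_le ham hmb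
  have hzero : ∫ t in m..b, f t = 0 := by
    rw [intervalIntegral.integral_of_le hmb]
    exact setIntegral_eq_zero_of_forall_eq_zero fun t ht => h0 t ht.1
  rw [← intervalIntegral.integral_add_adjacent_intervals
    (hf.mono_set (uIcc_subset_uIcc left_mem_uIcc hm))
    (hf.mono_set (uIcc_subset_uIcc hm right_mem_uIcc)), hzero, add_zero]

theorem integral_eq_zero_of_forall_gt_eq_zero (hba : b < a) (h0 : ∀ t > b, f t = 0) :
    ∫ t in a..b, f t = 0 :=
  intervalIntegral.integral_zero_ae <| ae_of_all _ fun t ht =>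
    h0 t (by simpa [min_eq_right hba.le] using ht.1)

end SplitIntegral

section VolterraComposition

variable {K L c : ℝ → ℝ} (hKm : Measurable K) (hKb : BddOnCompacts K)
  (hLm : Measurable L) (hLb : BddOnCompacts L) (hL0 : ∀ u < 0, L u = 0)
  (hcm : Measurable c) (hcb : BddOnCompacts c)
include hKm hKb hLm hLb hL0 hcm hcb

theorem integral_volterra_volterra {a x : ℝ} (hax : a ≤ x) :
    ∫ y in a..x, K (x - y) * ∫ z in a..y, L (y - z) * c z
      = ∫ z in a..x, (∫ u in (0 : ℝ)..(x - z), K (x - z - u) * L u) * c z := by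
  have hF : IntegrableOn (Function.uncurry fun y z => K (x - y) * (L (y - z) * c z))
      (uIoc a x ×ˢ uIoc a x) :=
    ((hKb.comp_continuous (by fun_prop)).mul ((hLb.comp_continuous (by fun_prop)).mul
      (hcb.comp_continuous (by fun_prop)))).integrableOn_of_isCompact (by fun_prop)
      (isCompact_uIcc.prod isCompact_uIcc) |>.mono_set (prod_mono uIoc_subset_uIcc uIoc_subset_uIcc)
  calc ∫ y in a..x, K (x - y) * ∫ z in a..y, L (y - z) * c z
      = ∫ y in a..x, ∫ z in a..x, K (x - y) * (L (y - z) * c z) := by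
        refine intervalIntegral.integral_congr fun y hy => ?_
        rw [uIcc_of_le hax] at hy
        rw [← intervalIntegral.integral_const_mul]
        refine (integral_eq_integral_of_forall_gt_eq_zero hy.1 hy.2 ?_ fun z hz => ?_).symm
        · exact (hKb.comp_continuous (by fun_prop)).mul ((hLb.comp_continuous (by fun_prop)).mul
            hcb) |>.intervalIntegrable (by fun_prop) a x
        · simp [hL0 _ (sub_neg.2 hz)]
    _ = ∫ z in a..x, ∫ y in a..x, K (x - y) * (L (y - z) * c z) :=
        intervalIntegral_intervalIntegral_swap hF
    _ = ∫ z in a..x, (∫ u in (0 : ℝ)..(x - z), K (x - z - u) * L u) * c z := by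
        refine intervalIntegral.integral_congr fun z hz => ?_
        rw [uIcc_of_le hax] at hz
        rw [← intervalIntegral.integral_mul_const,
          integral_eq_integral_of_forall_lt_eq_zero hz.1 hz.2 ?_ fun y hy => ?_]
        · rw [← sub_self z, ← intervalIntegral.integral_comp_sub_right]
          exact intervalIntegral.integral_congr fun y _ => by ring_nf
        · exact (hKb.comp_continuous (by fun_prop)).mul ((hLb.comp_continuous (by fun_prop)).mul
            (Continuous.bddOnCompacts continuous_const)) |>.intervalIntegrable (by fun_prop) a x
        · simp [hL0 _ (sub_neg.2 hy)]

theorem mul_integral_volterra_volterra {β : ℝ} (hβ : β ≠ 0)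
    (hconv : ∀ t ≥ (0 : ℝ), (∫ u in (0 : ℝ)..t, K (t - u) * L u) = (L t - K t) / β)
    {a x : ℝ} (hax : a ≤ x) :
    β * ∫ y in a..x, K (x - y) * ∫ z in a..y, L (y - z) * c z
      = (∫ y in a..x, L (x - y) * c y) - ∫ y in a..x, K (x - y) * c y := by
  rw [integral_volterra_volterra hKm hKb hLm hLb hL0 hcm hcb hax,
    ← intervalIntegral.integral_const_mul, ← intervalIntegral.integral_sub
      ((hLb.comp_continuous (by fun_prop)).mul hcb |>.intervalIntegrable (by fun_prop) a x)
      ((hKb.comp_continuous (by fun_prop)).mul hcb |>.intervalIntegrable (by fun_prop) a x)]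
  refine intervalIntegral.integral_congr fun z hz => ?_
  rw [uIcc_of_le hax] at hz
  rw [hconv _ (sub_nonneg.2 hz.2)]
  field_simp

end VolterraComposition

theorem integral_volterra_change_kernel {K L ω H E : ℝ → ℝ} {p φ a x : ℝ}
    (hKm : Measurable K) (hKb : BddOnCompacts K) (hLm : Measurable L) (hLb : BddOnCompacts L)
    (hL0 : ∀ u < 0, L u = 0) (hωm : Measurable ω) (hωb : BddOnCompacts ω)
    (hHm : Measurable H) (hHb : BddOnCompacts H) (hEm : Measurable E) (hEb : BddOnCompacts E)
    (hpφ : p ≠ φ)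
    (hconv : ∀ t ≥ (0 : ℝ), (∫ u in (0 : ℝ)..t, K (t - u) * L u) = (L t - K t) / (φ - p))
    (hH : ∀ y, H y = E y + ∫ z in a..y, L (y - z) * (ω z - φ) * H z) (hax : a ≤ x) :
    ∫ y in a..x, K (x - y) * (ω y - p) * H y
      = H x - E x + (φ - p) * ∫ y in a..x, K (x - y) * E y := by
  set c : ℝ → ℝ := fun y => (ω y - φ) * H y with hc
  have hcm : Measurable c := by fun_prop
  have hcb : BddOnCompacts c := (hωb.sub (Continuous.bddOnCompacts continuous_const)).mul hHb
  have hint : ∀ {g : ℝ → ℝ}, Measurable g → BddOnCompacts g →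
      IntervalIntegrable (fun y => K (x - y) * g y) volume a x := fun hgm hgb =>
    (hKb.comp_continuous (by fun_prop)).mul hgb |>.intervalIntegrable (by fun_prop) a x
  have hHE : ∀ y, H y - E y = ∫ z in a..y, L (y - z) * c z := fun y => by
    simp only [hc, ← mul_assoc]
    rw [hH y]
    ring
  have hA : (φ - p) * ∫ y in a..x, K (x - y) * (H y - E y)
      = (∫ y in a..x, L (x - y) * c y) - ∫ y in a..x, K (x - y) * c y := by
    simp only [hHE]
    exact mul_integral_volterra_volterra hKm hKb hLm hLb hL0 hcm hcb
      (sub_ne_zero.2 hpφ.symm) hconv hax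
  have hsplit : ∫ y in a..x, K (x - y) * (ω y - p) * H y
      = (∫ y in a..x, K (x - y) * c y) + (φ - p) * (∫ y in a..x, K (x - y) * (H y - E y))
        + (φ - p) * ∫ y in a..x, K (x - y) * E y := by
    have hint_c := hint hcm hcb
    have hint_HE := (hint (g := fun y => H y - E y) (hHm.sub hEm) (hHb.sub hEb)).const_mul (φ - p)
    rw [← intervalIntegral.integral_const_mul, ← intervalIntegral.integral_const_mul,
      ← intervalIntegral.integral_add hint_c hint_HE, ← intervalIntegral.integral_add
        (hint_c.add hint_HE) ((hint hEm hEb).const_mul _)]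
    refine intervalIntegral.integral_congr fun y _ => ?_
    simp only [hc]
    ring
  rw [hsplit, hA, ← hHE x]
  ring

theorem integral_comp_sub_mul_eq_integral_mul_comp_sub (g W : ℝ → ℝ) (a x : ℝ) :
    ∫ u in (0 : ℝ)..(x - a), g (x - a - u) * W u = ∫ y in a..x, W (x - y) * g (y - a) := by
  have hsubst := intervalIntegral.integral_comp_sub_left
    (fun u => g (x - a - u) * W u) (a := a) (b := x) x
  rw [sub_self] at hsubst
  rw [← hsubst]
  exact intervalIntegral.integral_congr fun y _ => by
    rw [show x - a - (x - y) = y - a by ring, mul_comm]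

theorem stmt2_general (p φ lam a : ℝ) (hpφ : p ≠ φ)
    (Wp Wφ : ℝ → ℝ)
    (hWp0 : ∀ x < (0:ℝ), Wp x = 0) (hWφ0 : ∀ x < (0:ℝ), Wφ x = 0)
    (hWpc : ContinuousOn Wp (Ici 0)) (hWφc : ContinuousOn Wφ (Ici 0))
    (hconv : ∀ x ≥ (0:ℝ), (∫ y in (0:ℝ)..x, Wp (x - y) * Wφ y) = (Wφ x - Wp x) / (φ - p))
    (Zp : ℝ → ℝ)
    (hZp : ∀ x ≥ (0:ℝ),
      Zp x = Real.exp (lam * x) -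
        (φ - p) * ∫ y in (0:ℝ)..x, Real.exp (lam * (x - y)) * Wp y)
    (hZpneg : ∀ x < (0:ℝ), Zp x = Real.exp (lam * x))
    (ω : ℝ → ℝ) (hωm : Measurable ω) (hωb : ∃ C, ∀ x, |ω x| ≤ C)
    (H : ℝ → ℝ) (hHm : Measurable H)
    (hHb : ∀ s : Set ℝ, IsCompact s → ∃ C, ∀ x ∈ s, |H x| ≤ C)
    (hH : ∀ x : ℝ, H x = Real.exp (lam * (x - a)) + ∫ y in a..x, Wφ (x - y) * (ω y - φ) * H y) :
    ∀ x : ℝ, H x = Zp (x - a) + ∫ y in a..x, Wp (x - y) * (ω y - p) * H y := by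
  have hWpm := measurable_of_continuousOn_Ici hWp0 hWpc
  have hWφm := measurable_of_continuousOn_Ici hWφ0 hWφc
  have hWpb := bddOnCompacts_of_continuousOn_Ici hWp0 hWpc
  have hWφb := bddOnCompacts_of_continuousOn_Ici hWφ0 hWφc
  intro x
  rcases lt_or_ge x a with hxa | hax
  · have hWp_int : ∫ y in a..x, Wp (x - y) * (ω y - p) * H y = 0 :=
      integral_eq_zero_of_forall_gt_eq_zero hxa fun y hy => by simp [hWp0 _ (sub_neg.2 hy)]
    have hWφ_int : ∫ y in a..x, Wφ (x - y) * (ω y - φ) * H y = 0 :=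
      integral_eq_zero_of_forall_gt_eq_zero hxa fun y hy => by simp [hWφ0 _ (sub_neg.2 hy)]
    rw [hH x, hWφ_int, hWp_int, hZpneg _ (sub_neg.2 hxa)]
  have hωb' : BddOnCompacts ω := fun _ _ => hωb.imp fun _ hC x _ => hC x
  rw [hZp _ (sub_nonneg.2 hax), integral_comp_sub_mul_eq_integral_mul_comp_sub
      (fun t => Real.exp (lam * t)),
    integral_volterra_change_kernel (E := fun y => Real.exp (lam * (y - a))) hWpm hWpb hWφm
      hWφb hWφ0 hωm hωb' hHm hHb (by fun_prop) (Continuous.bddOnCompacts (by fun_prop)) hpφ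
      hconv hH hax]
  ring

/-- alternate Volterra functional equations for the ω-scale function:
if `H` solves the defining equation with kernel `W_φ(x-y)(ω(y)-φ)` and inhomogeneity
`e^{λ(x-a)}`, then it solves the equation with kernel `W_p(x-y)(ω(y)-p)` and
inhomogeneity `Z_p(x-a)`. -/
theorem stmt2 (p φ lam a : ℝ) (hpφ : p ≠ φ) (hlam : 0 ≤ lam) (ha : a ≤ 0)
    (Wp Wφ : ℝ → ℝ)
    (hWp0 : ∀ x < (0:ℝ), Wp x = 0) (hWφ0 : ∀ x < (0:ℝ), Wφ x = 0)
    (hWpc : ContinuousOn Wp (Ici 0)) (hWφc : ContinuousOn Wφ (Ici 0))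
    (hconv : ∀ x ≥ (0:ℝ), (∫ y in (0:ℝ)..x, Wp (x - y) * Wφ y) = (Wφ x - Wp x) / (φ - p))
    (Zp : ℝ → ℝ)
    (hZp : ∀ x ≥ (0:ℝ),
      Zp x = Real.exp (lam * x) -
        (φ - p) * ∫ y in (0:ℝ)..x, Real.exp (lam * (x - y)) * Wp y)
    (hZpneg : ∀ x < (0:ℝ), Zp x = Real.exp (lam * x))
    (ω : ℝ → ℝ) (hωm : Measurable ω) (hωb : ∃ C, ∀ x, |ω x| ≤ C)
    (H : ℝ → ℝ) (hHm : Measurable H)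
    (hHb : ∀ s : Set ℝ, IsCompact s → ∃ C, ∀ x ∈ s, |H x| ≤ C)
    (hH : ∀ x : ℝ, H x = Real.exp (lam * (x - a)) + ∫ y in a..x, Wφ (x - y) * (ω y - φ) * H y) :
    ∀ x : ℝ, H x = Zp (x - a) + ∫ y in a..x, Wp (x - y) * (ω y - p) * H y :=
  stmt2_general p φ lam a hpφ Wp Wφ hWp0 hWφ0 hWpc hWφc hconv Zp hZp hZpneg ω hωm hωb H hHm hHb hH
end

section
/- Let K : ℝ × ℝ → ℝ be jointly measurable with K(x,y) = 0 whenever x < y, let c ≥ 0, and let W : ℝ → [0,∞) be measurable, vanish on (−∞,0), and be bounded on compact sets. Assume 0 ≤ K(x,y) ≤ c·W(x−y) for all y ≤ x. Then for every m ≥ 1 and all y ≤ x, the iterated kernels satisfy 0 ≤ K_m(x,y) ≤ c^m · W^{*m}(x−y), where W^{*m} denotes the m-fold convolution power of W. -/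
open MeasureTheory Set

/-- The iterated kernels: `K₁ = K` and `K_m(x,y) = ∫_y^x K(x,z) K_{m-1}(z,y) dz` for `m ≥ 2`. -/
noncomputable def iterK (K : ℝ → ℝ → ℝ) : ℕ → ℝ → ℝ → ℝ
  | 0 => fun _ _ => 0
  | 1 => K
  | m + 2 => fun x y => ∫ z in y..x, K x z * iterK K (m + 1) z y

/-- Convolution powers: `W^{*1} = W` and `W^{*m}(x) = ∫_0^x W(x-z) W^{*(m-1)}(z) dz`. -/
noncomputable def convPow (W : ℝ → ℝ) : ℕ → ℝ → ℝ
  | 0 => fun _ => 0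
  | 1 => W
  | m + 2 => fun x => ∫ z in (0:ℝ)..x, W (x - z) * convPow W (m + 1) z

/-!
Induction on `m`. The integrand of `K_{m+1}(x,y)` is bounded pointwise by
`c^{m+1} W(x-z) W^{*m}(z-y)`, and the substitution `u = z - y` turns the integral of the latter
over `[y,x]` into `W^{*(m+1)}(x-y)`. Comparing integrals only needs the majorant to be integrable
(a non-integrable nonnegative integrand has Bochner integral `0`), which is why `W^{*m}` is shown
to be measurable and bounded on compact intervals.
-/

theorem measurable_intervalIntegral_uncurry {α : Type*} [MeasurableSpace α] {μ : Measure ℝ}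
    [SFinite μ] {F : α → ℝ → ℝ} (hF : Measurable (Function.uncurry F)) {a b : α → ℝ}
    (ha : Measurable a) (hb : Measurable b) :
    Measurable fun x => ∫ z in a x..b x, F x z ∂μ := by
  have hIoc : ∀ {l u : α → ℝ}, Measurable l → Measurable u →
      Measurable fun x => ∫ z in Ioc (l x) (u x), F x z ∂μ := by
    intro l u hl hu
    have hs : MeasurableSet {p : α × ℝ | p.2 ∈ Ioc (l p.1) (u p.1)} :=
      (measurableSet_lt (hl.comp measurable_fst) measurable_snd).inter
        (measurableSet_le measurable_snd (hu.comp measurable_fst))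
    convert ((hF.indicator hs).stronglyMeasurable.integral_prod_right' (ν := μ)).measurable
      using 2 with x
    rw [← integral_indicator measurableSet_Ioc]
    rfl
  exact (hIoc ha hb).sub (hIoc hb ha)

theorem intervalIntegral_mono_of_nonneg {f g : ℝ → ℝ} {a b : ℝ} (hab : a ≤ b)
    (hf : ∀ x ∈ Icc a b, 0 ≤ f x) (hg : IntervalIntegrable g volume a b)
    (hfg : ∀ x ∈ Icc a b, f x ≤ g x) : ∫ x in a..b, f x ≤ ∫ x in a..b, g x := by
  rw [intervalIntegral.integral_of_le hab, intervalIntegral.integral_of_le hab]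
  exact integral_mono_of_nonneg
    (ae_restrict_of_forall_mem measurableSet_Ioc fun x hx => hf x (Ioc_subset_Icc_self hx)) hg.1
    (ae_restrict_of_forall_mem measurableSet_Ioc fun x hx => hfg x (Ioc_subset_Icc_self hx))

theorem intervalIntegral_mul_comp_sub (f g : ℝ → ℝ) (x y : ℝ) :
    ∫ z in y..x, f (x - z) * g (z - y) = ∫ u in (0:ℝ)..(x - y), f (x - y - u) * g u := by
  have := intervalIntegral.integral_comp_sub_right (fun u => f (x - y - u) * g u) y (a := y) (b := x)
  simpa only [sub_sub_sub_cancel_right, sub_self] using this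

theorem intervalIntegrable_mul_comp_sub {f g : ℝ → ℝ} {x y Cf Cg : ℝ} (hxy : y ≤ x)
    (hf : Measurable f) (hg : Measurable g) (hfC : ∀ u ∈ Icc 0 (x - y), |f u| ≤ Cf)
    (hgC : ∀ u ∈ Icc 0 (x - y), |g u| ≤ Cg) :
    IntervalIntegrable (fun z => f (x - z) * g (z - y)) volume y x := by
  rw [intervalIntegrable_iff_integrableOn_Ioc_of_le hxy]
  refine Measure.integrableOn_of_bounded (M := Cf * Cg) measure_Ioc_lt_top.ne
    (by fun_prop) (ae_restrict_of_forall_mem measurableSet_Ioc fun z hz => ?_)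
  have hxz : x - z ∈ Icc 0 (x - y) := ⟨by linarith [hz.2], by linarith [hz.1]⟩
  have hzy : z - y ∈ Icc 0 (x - y) := ⟨by linarith [hz.1], by linarith [hz.2]⟩
  rw [norm_mul, Real.norm_eq_abs, Real.norm_eq_abs]
  exact mul_le_mul (hfC _ hxz) (hgC _ hzy) (abs_nonneg _) ((abs_nonneg _).trans (hfC _ hxz))

section convPow

variable {W : ℝ → ℝ}

theorem measurable_convPow (hW : Measurable W) : ∀ m, Measurable (convPow W m)
  | 0 => measurable_const
  | 1 => hW
  | m + 2 => by
    have hF : Measurable (Function.uncurry fun x z => W (x - z) * convPow W (m + 1) z) :=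
      (hW.comp (measurable_fst.sub measurable_snd)).mul
        ((measurable_convPow hW (m + 1)).comp measurable_snd)
    exact measurable_intervalIntegral_uncurry hF measurable_const measurable_id

theorem convPow_nonneg (hW : ∀ x, 0 ≤ x → 0 ≤ W x) : ∀ m x, 0 ≤ x → 0 ≤ convPow W m x
  | 0, _, _ => le_rfl
  | 1, x, hx => hW x hx
  | m + 2, _, hx => intervalIntegral.integral_nonneg hx fun z hz =>
      mul_nonneg (hW _ (sub_nonneg.2 hz.2)) (convPow_nonneg hW (m + 1) z hz.1)

theorem convPow_succ_le {T C : ℝ} (hW : ∀ x, 0 ≤ x → 0 ≤ W x) (hC : ∀ x ∈ Icc 0 T, W x ≤ C) :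
    ∀ m, ∀ x ∈ Icc 0 T, convPow W (m + 1) x ≤ C ^ (m + 1) * T ^ m
  | 0, x, hx => by simpa [convPow] using hC x hx
  | m + 1, x, hx => by
    have hT : 0 ≤ T := hx.1.trans hx.2
    have hC0 : 0 ≤ C := (hW 0 le_rfl).trans (hC 0 ⟨le_rfl, hT⟩)
    calc convPow W (m + 2) x = ∫ z in (0:ℝ)..x, W (x - z) * convPow W (m + 1) z := rfl
      _ ≤ ∫ z in (0:ℝ)..x, C * (C ^ (m + 1) * T ^ m) := by
        refine intervalIntegral_mono_of_nonneg hx.1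
          (fun z hz => mul_nonneg (hW _ (sub_nonneg.2 hz.2)) (convPow_nonneg hW _ z hz.1))
          intervalIntegrable_const fun z hz => ?_
        have hxz : x - z ∈ Icc 0 T := ⟨sub_nonneg.2 hz.2, by linarith [hz.1, hx.2]⟩
        exact mul_le_mul (hC _ hxz) (convPow_succ_le hW hC m z ⟨hz.1, hz.2.trans hx.2⟩)
          (convPow_nonneg hW _ z hz.1) hC0
      _ = x * (C ^ (m + 2) * T ^ m) := by simp only [intervalIntegral.integral_const]; ring
      _ ≤ T * (C ^ (m + 2) * T ^ m) := by gcongr; exact hx.2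
      _ = C ^ (m + 1 + 1) * T ^ (m + 1) := by ring

end convPow

theorem iterK_succ_succ_le {K : ℝ → ℝ → ℝ} {W : ℝ → ℝ} {c C x y : ℝ} {m : ℕ} (hxy : y ≤ x)
    (hWm : Measurable W) (hW : ∀ u, 0 ≤ u → 0 ≤ W u)
    (hWC : ∀ u ∈ Icc 0 (x - y), W u ≤ C)
    (hK : ∀ z ∈ Icc y x, 0 ≤ K x z ∧ K x z ≤ c * W (x - z))
    (ih : ∀ z ∈ Icc y x,
      0 ≤ iterK K (m + 1) z y ∧ iterK K (m + 1) z y ≤ c ^ (m + 1) * convPow W (m + 1) (z - y)) :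
    0 ≤ iterK K (m + 2) x y ∧ iterK K (m + 2) x y ≤ c ^ (m + 2) * convPow W (m + 2) (x - y) := by
  have hint : IntervalIntegrable (fun z => W (x - z) * convPow W (m + 1) (z - y)) volume y x :=
    intervalIntegrable_mul_comp_sub hxy hWm (measurable_convPow hWm (m + 1))
      (fun u hu => (abs_of_nonneg (hW u hu.1)).trans_le (hWC u hu))
      (fun u hu => (abs_of_nonneg (convPow_nonneg hW _ u hu.1)).trans_le
        (convPow_succ_le hW hWC m u hu))
  refine ⟨intervalIntegral.integral_nonneg hxy fun z hz => mul_nonneg (hK z hz).1 (ih z hz).1, ?_⟩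
  calc iterK K (m + 2) x y = ∫ z in y..x, K x z * iterK K (m + 1) z y := rfl
    _ ≤ ∫ z in y..x, c ^ (m + 2) * (W (x - z) * convPow W (m + 1) (z - y)) := by
      refine intervalIntegral_mono_of_nonneg hxy
        (fun z hz => mul_nonneg (hK z hz).1 (ih z hz).1) (hint.const_mul _) fun z hz => ?_
      calc K x z * iterK K (m + 1) z y
          ≤ (c * W (x - z)) * (c ^ (m + 1) * convPow W (m + 1) (z - y)) :=
            mul_le_mul (hK z hz).2 (ih z hz).2 (ih z hz).1 ((hK z hz).1.trans (hK z hz).2)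
        _ = c ^ (m + 2) * (W (x - z) * convPow W (m + 1) (z - y)) := by ring
    _ = c ^ (m + 2) * convPow W (m + 2) (x - y) := by
      rw [intervalIntegral.integral_const_mul, intervalIntegral_mul_comp_sub]
      rfl

theorem stmt5_general (K : ℝ → ℝ → ℝ) (c : ℝ)
    (W : ℝ → ℝ) (hWmeas : Measurable W) (hWnonneg : ∀ x, 0 ≤ W x)
    (hWbdd : ∀ s : Set ℝ, IsCompact s → ∃ C, ∀ x ∈ s, W x ≤ C)
    (hKle : ∀ x y : ℝ, y ≤ x → 0 ≤ K x y ∧ K x y ≤ c * W (x - y)) :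
    ∀ m : ℕ, 1 ≤ m → ∀ x y : ℝ, y ≤ x →
      0 ≤ iterK K m x y ∧ iterK K m x y ≤ c ^ m * convPow W m (x - y) := by
  intro m hm x y hxy
  obtain ⟨n, rfl⟩ := Nat.exists_eq_add_of_le' hm
  clear hm
  induction n generalizing x with
  | zero => simpa [iterK, convPow] using hKle x y hxy
  | succ n ih =>
    obtain ⟨C, hC⟩ := hWbdd (Icc 0 (x - y)) isCompact_Icc
    exact iterK_succ_succ_le hxy hWmeas (fun u _ => hWnonneg u) hC
      (fun z hz => hKle x z hz.2) (fun z hz => ih z hz.1)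

/-- if `0 ≤ K(x,y) ≤ c·W(x-y)` for `y ≤ x`, then the iterated kernels
satisfy `0 ≤ K_m(x,y) ≤ c^m · W^{*m}(x-y)`. -/
theorem stmt5 (K : ℝ → ℝ → ℝ) (hKmeas : Measurable (Function.uncurry K))
    (hK0 : ∀ x y : ℝ, x < y → K x y = 0)
    (c : ℝ) (hc : 0 ≤ c)
    (W : ℝ → ℝ) (hWmeas : Measurable W) (hWnonneg : ∀ x, 0 ≤ W x)
    (hW0 : ∀ x < (0:ℝ), W x = 0)
    (hWbdd : ∀ s : Set ℝ, IsCompact s → ∃ C, ∀ x ∈ s, W x ≤ C)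
    (hKle : ∀ x y : ℝ, y ≤ x → 0 ≤ K x y ∧ K x y ≤ c * W (x - y)) :
    ∀ m : ℕ, 1 ≤ m → ∀ x y : ℝ, y ≤ x →
      0 ≤ iterK K m x y ∧ iterK K m x y ≤ c ^ m * convPow W m (x - y) :=
  stmt5_general K c W hWmeas hWnonneg hWbdd hKle
end

section
/- Let a ∈ ℝ and let W : [0,∞) → ℝ be continuous on [0,∞), continuously differentiable on (0,∞), and such that W′ extends to a continuous function on [0,∞). Let k : ℝ → ℝ be bounded and measurable, let H : ℝ → ℝ be continuous, and define I(x) = ∫_a^x W(x−y) k(y) H(y) dy. If at a point x₀ > a the function k has finite one-sided limits k(x₀−) and k(x₀+) (and k is continuous on a punctured neighbourhood of x₀), then I has one-sided derivatives at x₀ and I′(x₀+) − I′(x₀−) = W(0) · H(x₀) · ( k(x₀+) − k(x₀−) ). -/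
/-!
Since `W'` is bounded on compacts, `W` is Lipschitz on `[0, R]`; clamping the argument to
`[0, R]` gives a globally Lipschitz kernel `U` equal to `W 0` on `(-∞, 0]` and to `W` on
`[0, R]`. With `g = k * H` and `b > x₀`, near `x₀`
`I(x) = ∫_a^b U(x - y) g(y) dy - W(0) ∫_x^b g(y) dy`.
The first term is differentiable at `x₀` (differentiation under the integral sign: `U` is
Lipschitz, hence a.e. differentiable by Rademacher's theorem), so the jump of the one-sided
derivatives comes from the second term alone, whose one-sided derivatives at `x₀` are
`-W(0) g(x₀±)` by the fundamental theorem of calculus.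
-/

open MeasureTheory Set Filter

noncomputable def volInt (W k H : ℝ → ℝ) (a : ℝ) (x : ℝ) : ℝ :=
  ∫ y in a..x, W (x - y) * k y * H y

open Topology
open scoped NNReal

theorem exists_lipschitzOnWith_Icc_of_hasDerivAt_Ioi {E : Type*} [NormedAddCommGroup E]
    [NormedSpace ℝ E] {f f' : ℝ → E} {c : ℝ} (hf : ContinuousOn f (Ici c))
    (hf' : ∀ x ∈ Ioi c, HasDerivAt f (f' x) x) (hf'c : ContinuousOn f' (Ici c)) (R : ℝ) :
    ∃ L, LipschitzOnWith L f (Icc c R) := by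
  have hc : HasDerivWithinAt f (f' c) (Ici c) c := by
    refine hasDerivWithinAt_Ici_of_tendsto_deriv
      (fun x hx => (hf' x hx).differentiableAt.differentiableWithinAt)
      ((hf c self_mem_Ici).mono Ioi_subset_Ici_self) self_mem_nhdsWithin ?_
    refine ((hf'c c self_mem_Ici).mono_left (nhdsWithin_mono _ Ioi_subset_Ici_self)).congr' ?_
    filter_upwards [self_mem_nhdsWithin] with x hx using (hf' x hx).deriv.symm
  obtain ⟨L, hL⟩ := (isCompact_Icc.image_of_continuousOn
    (continuous_nnnorm.comp_continuousOn (hf'c.mono Icc_subset_Ici_self))).bddAbove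
  refine ⟨L, (convex_Icc c R).lipschitzOnWith_of_nnnorm_hasDerivWithin_le (fun x hx => ?_)
    fun x hx => hL (mem_image_of_mem _ hx)⟩
  rcases hx.1.eq_or_lt with rfl | hcx
  · exact hc.mono Icc_subset_Ici_self
  · exact (hf' x hcx).hasDerivWithinAt

theorem LipschitzOnWith.exists_lipschitzWith_eqOn_Icc {E : Type*} [PseudoEMetricSpace E]
    {f : ℝ → E} {L : ℝ≥0} {c R : ℝ} (hf : LipschitzOnWith L f (Icc c R)) (hcR : c ≤ R) :
    ∃ U : ℝ → E, LipschitzWith L U ∧ (∀ t ≤ c, U t = f c) ∧ EqOn U f (Icc c R) := by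
  refine ⟨IccExtend hcR fun t => f t, ?_, fun t ht => IccExtend_of_le_left hcR _ ht,
    fun t ht => IccExtend_of_mem hcR _ ht⟩
  have hcomp := hf.to_restrict.comp (LipschitzWith.projIcc hcR)
  rwa [mul_one] at hcomp

theorem intervalIntegral_comp_sub_mul_eq {W U g : ℝ → ℝ} {a x b c : ℝ} (hax : a ≤ x)
    (hxb : x ≤ b) (hUc : ∀ t ≤ 0, U t = c) (hUW : ∀ t ∈ Icc 0 (x - a), U t = W t)
    (hUg : IntervalIntegrable (fun y => U (x - y) * g y) volume a b) :
    ∫ y in a..x, W (x - y) * g y = (∫ y in a..b, U (x - y) * g y) - c * ∫ y in x..b, g y := by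
  have hx : x ∈ uIcc a b := mem_uIcc_of_le hax hxb
  have hleft : ∫ y in a..x, U (x - y) * g y = ∫ y in a..x, W (x - y) * g y :=
    intervalIntegral.integral_congr fun y hy => by
      rw [uIcc_of_le hax] at hy
      rw [hUW _ ⟨sub_nonneg.2 hy.2, by linarith [hy.1]⟩]
  have hright : ∫ y in x..b, U (x - y) * g y = c * ∫ y in x..b, g y := by
    rw [← intervalIntegral.integral_const_mul]
    refine intervalIntegral.integral_congr fun y hy => ?_
    rw [uIcc_of_le hxb] at hy
    rw [hUc _ (sub_nonpos.2 hy.1)]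
  rw [← intervalIntegral.integral_add_adjacent_intervals (hUg.mono_set (uIcc_subset_uIcc_left hx))
    (hUg.mono_set (uIcc_subset_uIcc_right hx)), hleft, hright, add_sub_cancel_right]

theorem hasDerivAt_intervalIntegral_comp_sub_mul {U g : ℝ → ℝ} {L : ℝ≥0} {a b : ℝ}
    (hU : LipschitzWith L U) (hg : IntervalIntegrable g volume a b) (x₀ : ℝ) :
    HasDerivAt (fun x => ∫ y in a..b, U (x - y) * g y)
      (∫ y in a..b, deriv U (x₀ - y) * g y) x₀ := by
  have hshift : ∀ x, Continuous fun y => U (x - y) :=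
    fun x => hU.continuous.comp (continuous_const.sub continuous_id)
  have hdiff : ∀ᵐ y, DifferentiableAt ℝ U (x₀ - y) :=
    (Measure.measurePreserving_sub_left volume x₀).quasiMeasurePreserving.ae
      hU.ae_differentiableAt_real
  refine (intervalIntegral.hasDerivAt_integral_of_dominated_loc_of_lip
    (bound := fun y => L * |g y|) univ_mem ?_ ?_ ?_ ?_ ?_ ?_).2
  · exact .of_forall fun x => (hshift x).aestronglyMeasurable.mul hg.def'.aestronglyMeasurable
  · exact hg.continuousOn_mul (hshift x₀).continuousOn
  · exact ((measurable_deriv U).comp (measurable_const.sub measurable_id)).aestronglyMeasurable.mul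
      hg.def'.aestronglyMeasurable
  · refine .of_forall fun y _ => LipschitzOnWith.of_dist_le_mul fun x _ x' _ => ?_
    have hLip := hU.dist_le_mul (x - y) (x' - y)
    rw [dist_sub_right] at hLip
    rw [Real.coe_nnabs, abs_of_nonneg (by positivity), Real.dist_eq, ← sub_mul, abs_mul,
      mul_right_comm, ← Real.dist_eq]
    exact mul_le_mul_of_nonneg_right hLip (abs_nonneg _)
  · exact hg.abs.const_mul _
  · filter_upwards [hdiff] with y hy _
    exact (hy.hasDerivAt.comp_sub_const x₀ y).mul_const (g y)

theorem hasDerivWithinAt_intervalIntegral_left_Ici_Iic {g : ℝ → ℝ} {x₀ b cp cm : ℝ}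
    (hg : IntervalIntegrable g volume x₀ b) (hmeas : Measurable g)
    (hp : Tendsto g (𝓝[>] x₀) (𝓝 cp)) (hm : Tendsto g (𝓝[<] x₀) (𝓝 cm)) :
    HasDerivWithinAt (fun x => ∫ y in x..b, g y) (-cp) (Ici x₀) x₀ ∧
      HasDerivWithinAt (fun x => ∫ y in x..b, g y) (-cm) (Iic x₀) x₀ := by
  have hmeas' : ∀ l, StronglyMeasurableAtFilter g l :=
    fun _ => hmeas.stronglyMeasurable.stronglyMeasurableAtFilter
  have hle : 𝓝[≤] x₀ ⊓ ae volume ≤ 𝓝[<] x₀ := by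
    rw [← Iic_sdiff_right, sdiff_eq, nhdsWithin_inter']
    exact inf_le_inf_left _ (le_principal_iff.2 (compl_mem_ae_iff.2 (measure_singleton x₀)))
  exact ⟨intervalIntegral.integral_hasDerivWithinAt_of_tendsto_ae_left hg (hmeas' _)
      (hp.mono_left inf_le_left),
    intervalIntegral.integral_hasDerivWithinAt_of_tendsto_ae_left hg (hmeas' _)
      (hm.mono_left hle)⟩

theorem stmt14_general (a : ℝ) (W W' : ℝ → ℝ)
    (hWc : ContinuousOn W (Ici 0))
    (hWd : ∀ x ∈ Ioi (0:ℝ), HasDerivAt W (W' x) x)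
    (hW'c : ContinuousOn W' (Ici 0))
    (k : ℝ → ℝ) (hkmeas : Measurable k) (hkbdd : ∃ C, ∀ y, |k y| ≤ C)
    (H : ℝ → ℝ) (hH : Continuous H)
    (x₀ : ℝ) (hx₀ : a < x₀)
    (kp km : ℝ)
    (hkp : Tendsto k (nhdsWithin x₀ (Ioi x₀)) (nhds kp))
    (hkm : Tendsto k (nhdsWithin x₀ (Iio x₀)) (nhds km)) :
    ∃ dp dm : ℝ,
      HasDerivWithinAt (volInt W k H a) dp (Ici x₀) x₀ ∧
      HasDerivWithinAt (volInt W k H a) dm (Iic x₀) x₀ ∧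
      dp - dm = W 0 * H x₀ * (kp - km) := by
  obtain ⟨C, hC⟩ := hkbdd
  set g : ℝ → ℝ := fun y => k y * H y
  set b := x₀ + 1
  obtain ⟨L, hL⟩ := exists_lipschitzOnWith_Icc_of_hasDerivAt_Ioi hWc hWd hW'c (b - a)
  obtain ⟨U, hU, hU0, hUW⟩ := hL.exists_lipschitzWith_eqOn_Icc (by linarith)
  have hg : IntervalIntegrable g volume a b :=
    ((intervalIntegrable_iff_integrableOn_Ioc_of_le (by linarith)).2
      (Integrable.of_bound hkmeas.aestronglyMeasurable C (ae_of_all _ hC))).mul_continuousOn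
      hH.continuousOn
  have hI : volInt W k H a =ᶠ[𝓝 x₀]
      fun x => (∫ y in a..b, U (x - y) * g y) - W 0 * ∫ y in x..b, g y := by
    filter_upwards [Ioo_mem_nhds hx₀ (lt_add_one x₀)] with x hx
    simp only [volInt, mul_assoc]
    exact intervalIntegral_comp_sub_mul_eq hx.1.le hx.2.le hU0
      (fun t ht => hUW ⟨ht.1, ht.2.trans (by linarith [hx.2])⟩)
      (hg.continuousOn_mul (hU.continuous.comp (continuous_const.sub continuous_id)).continuousOn)
  have hHx₀ := hH.tendsto x₀
  obtain ⟨hGp, hGm⟩ := hasDerivWithinAt_intervalIntegral_left_Ici_Iic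
    (hg.mono_set (uIcc_subset_uIcc_right (mem_uIcc_of_le hx₀.le (by linarith))))
    (hkmeas.mul hH.measurable) (hkp.mul (hHx₀.mono_left nhdsWithin_le_nhds))
    (hkm.mul (hHx₀.mono_left nhdsWithin_le_nhds))
  have hF := hasDerivAt_intervalIntegral_comp_sub_mul hU hg x₀
  refine ⟨_, _, (hF.hasDerivWithinAt.sub (hGp.const_mul (W 0))).congr_of_eventuallyEq
    (hI.filter_mono nhdsWithin_le_nhds) hI.eq_of_nhds,
    (hF.hasDerivWithinAt.sub (hGm.const_mul (W 0))).congr_of_eventuallyEq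
    (hI.filter_mono nhdsWithin_le_nhds) hI.eq_of_nhds, by ring⟩

/-- jump of the one-sided derivatives of `I(x) = ∫_a^x W(x-y) k(y) H(y) dy`
at a jump point `x₀` of `k`:
`I'(x₀+) - I'(x₀-) = W(0) · H(x₀) · (k(x₀+) - k(x₀-))`. -/
theorem stmt14 (a : ℝ) (W W' : ℝ → ℝ)
    (hWc : ContinuousOn W (Ici 0))
    (hWd : ∀ x ∈ Ioi (0:ℝ), HasDerivAt W (W' x) x)
    (hW'c : ContinuousOn W' (Ici 0))
    (k : ℝ → ℝ) (hkmeas : Measurable k) (hkbdd : ∃ C, ∀ y, |k y| ≤ C)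
    (H : ℝ → ℝ) (hH : Continuous H)
    (x₀ : ℝ) (hx₀ : a < x₀)
    (kp km : ℝ)
    (hkp : Tendsto k (nhdsWithin x₀ (Ioi x₀)) (nhds kp))
    (hkm : Tendsto k (nhdsWithin x₀ (Iio x₀)) (nhds km))
    (hkcont : ∃ ε > 0, ContinuousOn k (Ioo (x₀ - ε) (x₀ + ε) \ {x₀})) :
    ∃ dp dm : ℝ,
      HasDerivWithinAt (volInt W k H a) dp (Ici x₀) x₀ ∧
      HasDerivWithinAt (volInt W k H a) dm (Iic x₀) x₀ ∧
      dp - dm = W 0 * H x₀ * (kp - km) :=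
  stmt14_general a W W' hWc hWd hW'c k hkmeas hkbdd H hH x₀ hx₀ kp km hkp hkm
end

section
/- Let a ∈ ℝ and let W : [0,∞) → ℝ be such that W(0) = 0, W is continuously differentiable on [0,∞), twice continuously differentiable on (0,∞), and W″ extends to a continuous function on [0,∞). Let k : ℝ → ℝ be bounded and measurable, let H : ℝ → ℝ be continuous, and define I(x) = ∫_a^x W(x−y) k(y) H(y) dy. Then at every point x₀ > a at which k is continuous, I is twice differentiable and I″(x₀) = W′(0) · k(x₀) · H(x₀) + ∫_a^{x₀} W″(x₀−y) k(y) H(y) dy. -/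
/-!
Extend `Φ` by zero to the negative half-line, obtaining `K`. Since `Φ 0 = 0`, on `a ≤ x ≤ b`
the Volterra integral `∫_a^x Φ(x-y) g(y) dy` equals `∫_a^b K(x-y) g(y) dy`, an integral over a
fixed interval. `K` is Lipschitz on bounded sets and differentiable off `0` with derivative the
zero extension of `ψ = Φ'`; as `{y = x}` is null, differentiation under the integral sign with a
Lipschitz domination gives `d/dx ∫_a^x Φ(x-y) g(y) dy = ∫_a^x ψ(x-y) g(y) dy`. Applied to `W`
this gives `I'`, and applied to `W' - W'(0)`, plus the fundamental theorem of calculus for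
`W'(0) ∫_a^x g` at a continuity point of `g`, it gives `I''`.
-/

open MeasureTheory Set Filter

open Topology Interval

section Volterra

variable {Φ ψ : ℝ → ℝ}

theorem exists_lipschitzOnWith_Icc_of_hasDerivAt (hΦc : ContinuousOn Φ (Ici 0))
    (hΦ : ∀ u ∈ Ioi 0, HasDerivAt Φ (ψ u) u) (hψ : ContinuousOn ψ (Ici 0)) (R : ℝ) :
    ∃ C, LipschitzOnWith C Φ (Icc 0 R) := by
  obtain ⟨C, hC⟩ := isCompact_Icc.exists_bound_of_continuousOn (hψ.mono Icc_subset_Ici_self)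
  have hint : ∀ u ∈ Ici (0:ℝ), IntervalIntegrable ψ volume 0 u := fun u hu =>
    (hψ.mono (uIcc_of_le (mem_Ici.1 hu) ▸ Icc_subset_Ici_self)).intervalIntegrable
  have hFTC : ∀ u ∈ Ici (0:ℝ), ∫ t in 0..u, ψ t = Φ u - Φ 0 := fun u hu =>
    intervalIntegral.integral_eq_sub_of_hasDerivAt_of_le hu (hΦc.mono Icc_subset_Ici_self)
      (fun t ht => hΦ t ht.1) (hint u hu)
  refine ⟨C.toNNReal, LipschitzOnWith.of_dist_le_mul fun u hu v hv => ?_⟩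
  calc dist (Φ u) (Φ v) = ‖∫ t in v..u, ψ t‖ := by
        rw [← intervalIntegral.integral_interval_sub_left (hint u hu.1) (hint v hv.1),
          hFTC u hu.1, hFTC v hv.1, sub_sub_sub_cancel_right, dist_eq_norm]
    _ ≤ C * |u - v| := intervalIntegral.norm_integral_le_of_norm_le_const fun t ht =>
        hC t (uIcc_subset_Icc hv hu (uIoc_subset_uIcc ht))
    _ ≤ C.toNNReal * dist u v := by
        rw [Real.dist_eq]; gcongr; exact Real.le_coe_toNNReal C

theorem indicator_Ici_eq_comp_max (hΦ0 : Φ 0 = 0) :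
    (Ici 0).indicator Φ = fun u => Φ (max u 0) := by
  ext u
  by_cases hu : 0 ≤ u
  · simp [hu]
  · simp [hu, max_eq_right (le_of_not_ge hu), hΦ0]

theorem continuous_indicator_Ici (hΦ0 : Φ 0 = 0) (hΦc : ContinuousOn Φ (Ici 0)) :
    Continuous ((Ici 0).indicator Φ) := by
  rw [indicator_Ici_eq_comp_max hΦ0]
  exact hΦc.comp_continuous (continuous_id.max continuous_const) fun u => le_max_right u 0

theorem exists_lipschitzOnWith_indicator_Ici (hΦ0 : Φ 0 = 0) (hΦc : ContinuousOn Φ (Ici 0))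
    (hΦ : ∀ u ∈ Ioi 0, HasDerivAt Φ (ψ u) u) (hψ : ContinuousOn ψ (Ici 0)) (R : ℝ) :
    ∃ C, LipschitzOnWith C ((Ici 0).indicator Φ) (Icc (-R) R) := by
  obtain ⟨C, hC⟩ := exists_lipschitzOnWith_Icc_of_hasDerivAt hΦc hΦ hψ R
  refine ⟨C * 1, indicator_Ici_eq_comp_max hΦ0 ▸ hC.comp ?_ ?_⟩
  · exact (LipschitzWith.id.max_const 0).lipschitzOnWith
  · exact fun u hu => ⟨le_max_right u 0, max_le hu.2 (by linarith [hu.1, hu.2])⟩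

theorem hasDerivAt_indicator_Ici (hΦ : ∀ u ∈ Ioi 0, HasDerivAt Φ (ψ u) u) {u : ℝ}
    (hu : u ≠ 0) :
    HasDerivAt ((Ici 0).indicator Φ) ((Ici 0).indicator ψ u) u := by
  rcases hu.lt_or_gt with hu | hu
  · rw [indicator_of_notMem (notMem_Ici.2 hu)]
    exact (hasDerivAt_const u 0).congr_of_eventuallyEq <|
      eventually_of_mem (Iio_mem_nhds hu) fun v hv => indicator_of_notMem (notMem_Ici.2 hv) Φ
  · rw [indicator_of_mem (mem_Ici.2 hu.le)]
    exact (hΦ u hu).congr_of_eventuallyEq <|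
      eventually_of_mem (Ioi_mem_nhds hu) fun v hv => indicator_of_mem (mem_Ici.2 hv.le) Φ

theorem indicator_Ici_sub_mul (f g : ℝ → ℝ) (x y : ℝ) :
    (Ici 0).indicator f (x - y) * g y = {y | y ≤ x}.indicator (fun y => f (x - y) * g y) y := by
  by_cases h : y ≤ x <;> simp [h]

theorem hasDerivAt_integral_sub_mul (hΦ0 : Φ 0 = 0) (hΦc : ContinuousOn Φ (Ici 0))
    (hΦ : ∀ u ∈ Ioi 0, HasDerivAt Φ (ψ u) u) (hψ : ContinuousOn ψ (Ici 0))
    {g : ℝ → ℝ} (hg : LocallyIntegrable g) {a x : ℝ} (hax : a < x) :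
    HasDerivAt (fun z => ∫ y in a..z, Φ (z - y) * g y) (∫ y in a..x, ψ (x - y) * g y) x := by
  set b := x + 1
  have hxb : x < b := by linarith
  have hgi : IntervalIntegrable g volume a b :=
    (hg.integrableOn_isCompact isCompact_uIcc).intervalIntegrable
  have hKc : ∀ z, Continuous fun y => (Ici 0).indicator Φ (z - y) :=
    fun z => (continuous_indicator_Ici hΦ0 hΦc).comp (continuous_const.sub continuous_id)
  obtain ⟨C, hC⟩ := exists_lipschitzOnWith_indicator_Ici hΦ0 hΦc hΦ hψ (b - a)
  have hmeas : AEStronglyMeasurable ({y | y ≤ x}.indicator fun y => ψ (x - y) * g y)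
      (volume.restrict (Ι a b)) := by
    refine (aestronglyMeasurable_indicator_iff measurableSet_Iic).2 <|
      AEStronglyMeasurable.mono_measure ?_
        (Measure.restrict_mono subset_rfl Measure.restrict_le_self)
    have hψx : ContinuousOn (fun y => ψ (x - y)) (Iic x) :=
      hψ.comp (continuousOn_const.sub continuousOn_id) fun y hy => mem_Ici.2 (sub_nonneg.2 hy)
    exact (hψx.aestronglyMeasurable measurableSet_Iic).mul hg.aestronglyMeasurable.restrict
  have hlip : ∀ y ∈ Ι a b, LipschitzOnWith (Real.nnabs (C * g y))
      (fun z => (Ici 0).indicator Φ (z - y) * g y) (Ioo a b) := by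
    intro y hy
    rw [uIoc_of_le (hax.trans hxb).le] at hy
    have hmem : ∀ w ∈ Ioo a b, w - y ∈ Icc (-(b - a)) (b - a) := fun w hw =>
      ⟨by linarith [hw.1, hy.2], by linarith [hw.2, hy.1]⟩
    refine LipschitzOnWith.of_dist_le_mul fun z hz z' hz' => ?_
    calc dist ((Ici 0).indicator Φ (z - y) * g y) ((Ici 0).indicator Φ (z' - y) * g y)
        = dist ((Ici 0).indicator Φ (z - y)) ((Ici 0).indicator Φ (z' - y)) * |g y| := by
          rw [Real.dist_eq, Real.dist_eq, ← sub_mul, abs_mul]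
      _ ≤ C * dist (z - y) (z' - y) * |g y| := by
          gcongr; exact hC.dist_le_mul _ (hmem z hz) _ (hmem z' hz')
      _ = Real.nnabs (C * g y) * dist z z' := by
          simp only [dist_sub_right, map_mul, NNReal.coe_mul, Real.coe_nnabs, NNReal.abs_eq]
          ring
  have hdiff : ∀ y ≠ x, HasDerivAt (fun z => (Ici 0).indicator Φ (z - y) * g y)
      ({y | y ≤ x}.indicator (fun y => ψ (x - y) * g y) y) x := by
    intro y hy
    rw [← indicator_Ici_sub_mul]
    exact ((hasDerivAt_indicator_Ici hΦ (sub_ne_zero.2 hy.symm)).comp_sub_const x y).mul_const _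
  obtain ⟨-, hderiv⟩ := intervalIntegral.hasDerivAt_integral_of_dominated_loc_of_lip
    (F := fun z y => (Ici 0).indicator Φ (z - y) * g y) (bound := fun y => C * g y)
    (Ioo_mem_nhds hax hxb)
    (Eventually.of_forall fun z =>
      ((hKc z).aestronglyMeasurable.mul hg.aestronglyMeasurable).restrict)
    (hgi.continuousOn_mul (hKc x).continuousOn) hmeas (ae_of_all _ hlip) (hgi.const_mul _)
    ((Measure.ae_ne volume x).mono fun y hy _ => hdiff y hy)
  rw [intervalIntegral.integral_indicator ⟨hax.le, hxb.le⟩] at hderiv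
  refine hderiv.congr_of_eventuallyEq ?_
  filter_upwards [Ioo_mem_nhds hax hxb] with z hz
  simp only [indicator_Ici_sub_mul]
  exact (intervalIntegral.integral_indicator ⟨hz.1.le, hz.2.le⟩).symm

theorem hasDerivAt_integral_sub_mul_of_continuousAt (hΦc : ContinuousOn Φ (Ici 0))
    (hΦ : ∀ u ∈ Ioi 0, HasDerivAt Φ (ψ u) u) (hψ : ContinuousOn ψ (Ici 0))
    {g : ℝ → ℝ} (hg : LocallyIntegrable g) {a x : ℝ} (hax : a < x)
    (hgx : ContinuousAt g x) :
    HasDerivAt (fun z => ∫ y in a..z, Φ (z - y) * g y)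
      (Φ 0 * g x + ∫ y in a..x, ψ (x - y) * g y) x := by
  have hgi : ∀ z, IntervalIntegrable g volume a z := fun z =>
    (hg.integrableOn_isCompact isCompact_uIcc).intervalIntegrable
  have hprim : HasDerivAt (fun z => ∫ y in a..z, g y) (g x) x :=
    intervalIntegral.integral_hasDerivAt_right (hgi x)
      hg.aestronglyMeasurable.stronglyMeasurableAtFilter hgx
  have hvol := hasDerivAt_integral_sub_mul (Φ := fun u => Φ u - Φ 0) (sub_self _)
    (hΦc.sub continuousOn_const) (fun u hu => (hΦ u hu).sub_const _) hψ hg hax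
  refine ((hprim.const_mul (Φ 0)).add hvol).congr_of_eventuallyEq ?_
  filter_upwards [Ioi_mem_nhds hax] with z hz
  have hcont : ContinuousOn (fun y => Φ (z - y) - Φ 0) [[a, z]] := by
    rw [uIcc_of_le (le_of_lt hz)]
    exact (hΦc.comp (continuousOn_const.sub continuousOn_id) fun y hy => sub_nonneg.2 hy.2).sub
      continuousOn_const
  show _ = Φ 0 * (∫ y in a..z, g y) + ∫ y in a..z, (Φ (z - y) - Φ 0) * g y
  rw [← intervalIntegral.integral_const_mul,
    ← intervalIntegral.integral_add ((hgi z).const_mul _) ((hgi z).continuousOn_mul hcont)]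
  congr 1 with y
  ring

end Volterra

/-- second-derivative Leibniz rule: with `W(0) = 0`, `W` continuously
differentiable on `[0,∞)`, twice continuously differentiable on `(0,∞)` with second
derivative extending continuously to `[0,∞)`, `k` bounded measurable and `H`
continuous, at every `x₀ > a` where `k` is continuous, `I` is twice differentiable and
`I''(x₀) = W'(0) k(x₀) H(x₀) + ∫_a^{x₀} W''(x₀-y) k(y) H(y) dy`. -/
theorem stmt15 (a : ℝ) (W W' W'' : ℝ → ℝ)
    (hW0 : W 0 = 0)
    (hWd : ∀ x ∈ Ici (0:ℝ), HasDerivWithinAt W (W' x) (Ici 0) x)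
    (hW'c : ContinuousOn W' (Ici 0))
    (hW'd : ∀ x ∈ Ioi (0:ℝ), HasDerivAt W' (W'' x) x)
    (hW''c : ContinuousOn W'' (Ici 0))
    (k : ℝ → ℝ) (hkmeas : Measurable k) (hkbdd : ∃ C, ∀ y, |k y| ≤ C)
    (H : ℝ → ℝ) (hH : Continuous H)
    (x₀ : ℝ) (hx₀ : a < x₀) (hkcont : ContinuousAt k x₀) :
    ∃ I' : ℝ → ℝ,
      (∀ᶠ x in nhds x₀, HasDerivAt (volInt W k H a) (I' x) x) ∧
      HasDerivAt I'
        (W' 0 * k x₀ * H x₀ + ∫ y in a..x₀, W'' (x₀ - y) * k y * H y) x₀ := by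
  obtain ⟨C, hC⟩ := hkbdd
  have hg : LocallyIntegrable (fun y => k y * H y) :=
    ((memLp_top_of_bound hkmeas.aestronglyMeasurable C (ae_of_all _ hC)).locallyIntegrable
      le_top).mul_continuous hH
  have hW : ∀ u ∈ Ioi (0:ℝ), HasDerivAt W (W' u) u := fun u hu =>
    (hWd u (mem_Ici.2 hu.le)).hasDerivAt (Ici_mem_nhds hu)
  refine ⟨fun x => ∫ y in a..x, W' (x - y) * (k y * H y), ?_, ?_⟩
  · filter_upwards [Ioi_mem_nhds hx₀] with x hx
    show HasDerivAt (fun z => ∫ y in a..z, W (z - y) * k y * H y) _ x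
    simpa only [mul_assoc] using hasDerivAt_integral_sub_mul hW0
      (fun u hu => (hWd u hu).continuousWithinAt) hW hW'c hg hx
  · simpa only [mul_assoc] using hasDerivAt_integral_sub_mul_of_continuousAt hW'c hW'd hW''c hg
      hx₀ (hkcont.mul hH.continuousAt)
end

section
/- Let a ≤ 0, let W : ℝ → [0,∞) vanish on (−∞,0) and be continuous on [0,∞), let k : ℝ → [0,∞) be bounded and measurable, and let Z : ℝ → [0,∞) be continuous. Set K(x,y) = W(x−y)·k(y) for y ≤ x and K(x,y) = 0 for x < y, let K_m be the iterated kernels, K̄_m = Σ_{i=1}^m K_i, R = Σ_{m=1}^∞ K_m, and H_m(x) = Z(x) + ∫_a^x K̄_m(x,y) Z(y) dy. Then for each x ∈ ℝ the sequence (H_m(x))_{m≥1} is nondecreasing in m, and H_m converges, uniformly on every compact subset of ℝ, to the continuous function H(x) = Z(x) + ∫_a^x R(x,y) Z(y) dy. -/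
/-!
On every strip `0 ≤ x - y ≤ r` the kernel is bounded by some `L`, and induction gives
`K_{m+1}(x,y) ≤ L^{m+1} (x-y)^m / m!`. So the Neumann series `R = ∑ K_m` converges uniformly on
such strips (Weierstrass M-test), which makes `H_m → H` uniform on every half-line `(-∞, b]`;
monotonicity in `m` is the positivity of the `K_m`. By dominated convergence each `K_m(·, y)` is
continuous away from `y`, hence each `H_m` is continuous, and so is their locally uniform limit `H`.
-/

open MeasureTheory Set Filter

/-- The kernel `K(x,y) = W(x-y)·k(y)` for `y ≤ x`, and `0` for `x < y`. -/
noncomputable def volKernel (W k : ℝ → ℝ) : ℝ → ℝ → ℝ :=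
  fun x y => if y ≤ x then W (x - y) * k y else 0

/-- The Picard iterates `H_m(x) = Z(x) + ∫_a^x K̄_m(x,y) Z(y) dy`, where
`K̄_m = Σ_{i=1}^m K_i`. -/
noncomputable def picardH (W k Z : ℝ → ℝ) (a : ℝ) (m : ℕ) (x : ℝ) : ℝ :=
  Z x + ∫ y in a..x, (∑ i ∈ Finset.Icc 1 m, iterK (volKernel W k) i x y) * Z y

/-- The limit function `H(x) = Z(x) + ∫_a^x R(x,y) Z(y) dy`, where
`R = Σ_{m=1}^∞ K_m` is the resolvent kernel. -/
noncomputable def limitH (W k Z : ℝ → ℝ) (a : ℝ) (x : ℝ) : ℝ :=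
  Z x + ∫ y in a..x, (∑' m : ℕ, iterK (volKernel W k) (m + 1) x y) * Z y

open Function

section ParametricIntegral

theorem continuousAt_setIntegral_Ioc {F : ℝ → ℝ → ℝ} {a b c x₀ : ℝ} (hb : x₀ < b)
    (hFm : ∀ x, AEStronglyMeasurable (F x) (volume.restrict (Ioc a x)))
    (hFb : ∀ x y, a < y → y ≤ x → x ≤ b → ‖F x y‖ ≤ c)
    (hFc : ∀ y < x₀, ContinuousAt (F · y) x₀) :
    ContinuousAt (fun x => ∫ y in Ioc a x, F x y) x₀ := by
  simp_rw [← integral_indicator measurableSet_Ioc]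
  refine tendsto_integral_filter_of_dominated_convergence ((Ioc a b).indicator fun _ => c)
    (Eventually.of_forall fun x => (aestronglyMeasurable_indicator_iff measurableSet_Ioc).2 (hFm x))
    ?_ ((integrableOn_const measure_Ioc_lt_top.ne).integrable_indicator measurableSet_Ioc) ?_
  · filter_upwards [Iio_mem_nhds hb] with x hx
    refine Eventually.of_forall fun y => ?_
    by_cases hy : y ∈ Ioc a x
    · rw [indicator_of_mem hy, indicator_of_mem (show y ∈ Ioc a b from ⟨hy.1, hy.2.trans hx.le⟩)]
      exact hFb x y hy.1 hy.2 hx.le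
    · rw [indicator_of_notMem hy, norm_zero]
      exact indicator_nonneg (fun y hy => (norm_nonneg _).trans (hFb b y hy.1 hy.2 le_rfl)) y
  · filter_upwards [compl_mem_ae_iff.2 (measure_singleton x₀)] with y (hy : y ≠ x₀)
    rcases hy.lt_or_gt with hlt | hgt
    · by_cases hay : a < y
      · rw [indicator_of_mem (show y ∈ Ioc a x₀ from ⟨hay, hlt.le⟩)]
        refine (hFc y hlt).tendsto.congr' ?_
        filter_upwards [Ioi_mem_nhds hlt] with x hx
        exact (indicator_of_mem (show y ∈ Ioc a x from ⟨hay, hx.le⟩) _).symm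
      · have hzero : ∀ x, (Ioc a x).indicator (F x) y = 0 :=
          fun x => indicator_of_notMem (fun h => hay h.1) _
        simp only [hzero, tendsto_const_nhds]
    · rw [indicator_of_notMem fun h => hgt.not_ge h.2]
      refine tendsto_const_nhds.congr' ?_
      filter_upwards [Iio_mem_nhds hgt] with x hx
      exact (indicator_of_notMem (fun h => hx.not_ge h.2) _).symm

theorem tendstoUniformlyOn_setIntegral_Ioc {G : ℕ → ℝ → ℝ → ℝ} {g : ℝ → ℝ → ℝ} {a b : ℝ}
    (hG : ∀ m x, IntegrableOn (G m x) (Ioc a x)) (hg : ∀ x, IntegrableOn (g x) (Ioc a x))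
    (hGg : TendstoUniformlyOn (fun m p => G m p.1 p.2) (fun p => g p.1 p.2) atTop
      {p : ℝ × ℝ | p.1 ≤ b ∧ p.2 ∈ Ioc a p.1}) :
    TendstoUniformlyOn (fun m x => ∫ y in Ioc a x, G m x y) (fun x => ∫ y in Ioc a x, g x y)
      atTop (Iic b) := by
  rw [Metric.tendstoUniformlyOn_iff] at hGg ⊢
  intro ε hε
  set l := max (b - a) 0
  have hδ : 0 < ε / (l + 1) := by positivity
  filter_upwards [hGg _ hδ] with m hm x (hx : x ≤ b)
  have hlen : volume.real (Ioc a x) ≤ l := by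
    rw [Real.volume_real_Ioc]
    exact max_le_max_right _ (by linarith)
  calc dist (∫ y in Ioc a x, g x y) (∫ y in Ioc a x, G m x y)
      = ‖∫ y in Ioc a x, (g x y - G m x y)‖ := by
        rw [dist_eq_norm, integral_sub (hg x) (hG m x)]
    _ ≤ ε / (l + 1) * volume.real (Ioc a x) :=
        norm_setIntegral_le_of_norm_le_const measure_Ioc_lt_top fun y hy =>
          (hm (x, y) ⟨hx, hy⟩).le
    _ ≤ ε / (l + 1) * l := by gcongr
    _ < ε := by
        rw [div_mul_eq_mul_div, div_lt_iff₀ (by positivity)]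
        nlinarith

theorem intervalIntegral_eq_setIntegral_Ioc {f : ℝ → ℝ} {a x : ℝ} (hf : ∀ y, x < y → f y = 0) :
    ∫ y in a..x, f y = ∫ y in Ioc a x, f y := by
  rcases le_or_gt a x with h | h
  · exact intervalIntegral.integral_of_le h
  · rw [intervalIntegral.integral_of_ge h.le,
      setIntegral_eq_zero_of_forall_eq_zero fun y hy => hf y hy.1, Ioc_eq_empty h.not_gt,
      Measure.restrict_empty, integral_zero_measure, neg_zero]

end ParametricIntegral

section IteratedKernel

variable {K : ℝ → ℝ → ℝ}

theorem iterK_eq_zero_of_lt (hK : ∀ ⦃x y⦄, x < y → K x y = 0) :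
    ∀ m ⦃x y : ℝ⦄, x < y → iterK K m x y = 0
  | 0, _, _, _ => rfl
  | 1, _, _, h => hK h
  | m + 2, x, y, h => by
    simp only [iterK]
    rw [intervalIntegral.integral_of_ge h.le, neg_eq_zero]
    exact setIntegral_eq_zero_of_forall_eq_zero fun z hz => by rw [hK hz.1, zero_mul]

theorem iterK_add_two (hK : ∀ ⦃x y⦄, x < y → K x y = 0) (m : ℕ) (x y : ℝ) :
    iterK K (m + 2) x y = ∫ z in Ioc y x, K x z * iterK K (m + 1) z y := by
  rcases le_or_gt y x with h | h
  · exact intervalIntegral.integral_of_le h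
  · rw [iterK_eq_zero_of_lt hK _ h, Ioc_eq_empty h.not_gt, Measure.restrict_empty,
      integral_zero_measure]

theorem iterK_nonneg (hK : ∀ ⦃x y⦄, x < y → K x y = 0) (hKn : ∀ x y, 0 ≤ K x y) :
    ∀ m x y, 0 ≤ iterK K m x y
  | 0, _, _ => le_rfl
  | 1, x, y => hKn x y
  | m + 2, x, y => by
    rw [iterK_add_two hK]
    exact setIntegral_nonneg measurableSet_Ioc fun z _ =>
      mul_nonneg (hKn x z) (iterK_nonneg hK hKn (m + 1) z y)

theorem measurable_iterK (hK : ∀ ⦃x y⦄, x < y → K x y = 0) (hKm : Measurable (uncurry K)) :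
    ∀ m, Measurable (uncurry (iterK K m))
  | 0 => measurable_const
  | 1 => hKm
  | m + 2 => by
    have hind : Measurable fun q : (ℝ × ℝ) × ℝ => (Ioc q.1.2 q.1.1).indicator
        (fun z => K q.1.1 z * iterK K (m + 1) z q.1.2) q.2 := by
      simp only [indicator_apply, mem_Ioc]
      refine Measurable.ite ?_ ?_ measurable_const
      · exact (measurableSet_lt measurable_fst.snd measurable_snd).inter
          (measurableSet_le measurable_snd measurable_fst.fst)
      · exact (hKm.comp (measurable_fst.fst.prodMk measurable_snd)).mul
          ((measurable_iterK hK hKm (m + 1)).comp (measurable_snd.prodMk measurable_fst.snd))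
    have heq : uncurry (iterK K (m + 2)) = fun p : ℝ × ℝ => ∫ z, (Ioc p.2 p.1).indicator
        (fun z => K p.1 z * iterK K (m + 1) z p.2) z := by
      ext p
      rw [uncurry_apply_pair, iterK_add_two hK, integral_indicator measurableSet_Ioc]
    rw [heq]
    exact (hind.stronglyMeasurable.integral_prod_right' (ν := volume)).measurable

theorem iterK_le (hK : ∀ ⦃x y⦄, x < y → K x y = 0) (hKn : ∀ x y, 0 ≤ K x y) {r L : ℝ}
    (hL : ∀ x y, y ≤ x → x - y ≤ r → K x y ≤ L) :
    ∀ m x y, y ≤ x → x - y ≤ r →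
      iterK K (m + 1) x y ≤ L ^ (m + 1) * (x - y) ^ m / m.factorial
  | 0, x, y, hyx, hr => by simpa [iterK] using hL x y hyx hr
  | m + 1, x, y, hyx, hr => by
    have hbound : ∀ z ∈ Ioc y x,
        K x z * iterK K (m + 1) z y ≤ L ^ (m + 2) / m.factorial * (z - y) ^ m := by
      intro z hz
      have hKL := hL x z hz.2 (by linarith [hz.1])
      calc K x z * iterK K (m + 1) z y
          ≤ L * (L ^ (m + 1) * (z - y) ^ m / m.factorial) :=
            mul_le_mul hKL (iterK_le hK hKn hL m z y hz.1.le (by linarith [hz.2]))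
              (iterK_nonneg hK hKn _ _ _) ((hKn x z).trans hKL)
        _ = L ^ (m + 2) / m.factorial * (z - y) ^ m := by ring
    rw [iterK_add_two hK]
    calc ∫ z in Ioc y x, K x z * iterK K (m + 1) z y
        ≤ ∫ z in Ioc y x, L ^ (m + 2) / m.factorial * (z - y) ^ m :=
          integral_mono_of_nonneg
            (ae_of_all _ fun z => mul_nonneg (hKn x z) (iterK_nonneg hK hKn _ _ _))
            (Continuous.integrableOn_Ioc (by fun_prop))
            (ae_restrict_of_forall_mem measurableSet_Ioc hbound)
      _ = L ^ (m + 2) / m.factorial * ((x - y) ^ (m + 1) / (m + 1)) := by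
          rw [← intervalIntegral.integral_of_le hyx, intervalIntegral.integral_const_mul,
            intervalIntegral.integral_comp_sub_right (· ^ m), sub_self, integral_pow]
          simp
      _ = L ^ (m + 1 + 1) * (x - y) ^ (m + 1) / (m + 1).factorial := by
          rw [Nat.factorial_succ]
          push_cast
          field_simp

theorem exists_summable_bound_iterK (hK : ∀ ⦃x y⦄, x < y → K x y = 0)
    (hKn : ∀ x y, 0 ≤ K x y) (hKb : ∀ r, ∃ L, ∀ x y, y ≤ x → x - y ≤ r → K x y ≤ L) (r : ℝ) :
    ∃ B : ℕ → ℝ, Summable B ∧ ∀ m x y, y ≤ x → x - y ≤ r → iterK K (m + 1) x y ≤ B m := by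
  obtain ⟨L, hL⟩ := hKb r
  refine ⟨fun m => L * ((L * |r|) ^ m / m.factorial),
    (Real.summable_pow_div_factorial _).mul_left L, fun m x y hyx hr => ?_⟩
  have hL0 : 0 ≤ L := (hKn y y).trans (hL y y le_rfl (by linarith))
  calc iterK K (m + 1) x y ≤ L ^ (m + 1) * (x - y) ^ m / m.factorial :=
        iterK_le hK hKn hL m x y hyx hr
    _ ≤ L ^ (m + 1) * |r| ^ m / m.factorial := by
        gcongr
        exact hr.trans (le_abs_self r)
    _ = L * ((L * |r|) ^ m / m.factorial) := by ring

theorem summable_iterK (hK : ∀ ⦃x y⦄, x < y → K x y = 0) (hKn : ∀ x y, 0 ≤ K x y)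
    (hKb : ∀ r, ∃ L, ∀ x y, y ≤ x → x - y ≤ r → K x y ≤ L) (x y : ℝ) :
    Summable fun m => iterK K (m + 1) x y := by
  rcases lt_or_ge x y with h | h
  · simp [iterK_eq_zero_of_lt hK _ h]
  · obtain ⟨B, hB, hBle⟩ := exists_summable_bound_iterK hK hKn hKb (x - y)
    exact hB.of_nonneg_of_le (fun m => iterK_nonneg hK hKn _ x y)
      fun m => hBle m x y h le_rfl

end IteratedKernel

section Resolvent

variable {K : ℝ → ℝ → ℝ}

noncomputable def iterKSum (K : ℝ → ℝ → ℝ) (m : ℕ) (x y : ℝ) : ℝ :=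
  ∑ i ∈ Finset.range m, iterK K (i + 1) x y

noncomputable def resolventKernel (K : ℝ → ℝ → ℝ) (x y : ℝ) : ℝ :=
  ∑' i, iterK K (i + 1) x y

theorem monotone_iterKSum (hK : ∀ ⦃x y⦄, x < y → K x y = 0) (hKn : ∀ x y, 0 ≤ K x y)
    (x y : ℝ) : Monotone fun m => iterKSum K m x y := fun _ _ hmn =>
  Finset.sum_le_sum_of_subset_of_nonneg (Finset.range_subset_range.2 hmn)
    fun _ _ _ => iterK_nonneg hK hKn _ x y

theorem iterKSum_nonneg (hK : ∀ ⦃x y⦄, x < y → K x y = 0) (hKn : ∀ x y, 0 ≤ K x y)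
    (m : ℕ) (x y : ℝ) : 0 ≤ iterKSum K m x y :=
  monotone_iterKSum hK hKn x y m.zero_le

theorem iterKSum_le_resolventKernel (hK : ∀ ⦃x y⦄, x < y → K x y = 0)
    (hKn : ∀ x y, 0 ≤ K x y) (hKb : ∀ r, ∃ L, ∀ x y, y ≤ x → x - y ≤ r → K x y ≤ L)
    (m : ℕ) (x y : ℝ) : iterKSum K m x y ≤ resolventKernel K x y :=
  (summable_iterK hK hKn hKb x y).sum_le_tsum _ fun _ _ => iterK_nonneg hK hKn _ x y

theorem exists_resolventKernel_le (hK : ∀ ⦃x y⦄, x < y → K x y = 0)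
    (hKn : ∀ x y, 0 ≤ K x y) (hKb : ∀ r, ∃ L, ∀ x y, y ≤ x → x - y ≤ r → K x y ≤ L) (r : ℝ) :
    ∃ C, ∀ x y, y ≤ x → x - y ≤ r → resolventKernel K x y ≤ C := by
  obtain ⟨B, hB, hBle⟩ := exists_summable_bound_iterK hK hKn hKb r
  exact ⟨∑' m, B m, fun x y hyx hr =>
    (summable_iterK hK hKn hKb x y).tsum_le_tsum (fun m => hBle m x y hyx hr) hB⟩

theorem measurable_iterKSum (hK : ∀ ⦃x y⦄, x < y → K x y = 0) (hKm : Measurable (uncurry K))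
    (m : ℕ) (x : ℝ) : Measurable (iterKSum K m x) :=
  Finset.measurable_sum _ fun i _ => (measurable_iterK hK hKm (i + 1)).of_uncurry_left

theorem measurable_resolventKernel (hK : ∀ ⦃x y⦄, x < y → K x y = 0)
    (hKn : ∀ x y, 0 ≤ K x y) (hKm : Measurable (uncurry K))
    (hKb : ∀ r, ∃ L, ∀ x y, y ≤ x → x - y ≤ r → K x y ≤ L) (x : ℝ) :
    Measurable (resolventKernel K x) :=
  measurable_of_tendsto_metrizable (measurable_iterKSum hK hKm · x) <|
    tendsto_pi_nhds.2 fun y => (summable_iterK hK hKn hKb x y).hasSum.tendsto_sum_nat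

theorem continuousAt_iterK (hK : ∀ ⦃x y⦄, x < y → K x y = 0) (hKn : ∀ x y, 0 ≤ K x y)
    (hKm : Measurable (uncurry K)) (hKb : ∀ r, ∃ L, ∀ x y, y ≤ x → x - y ≤ r → K x y ≤ L)
    (hKc : ∀ ⦃y x₀⦄, y < x₀ → ContinuousAt (K · y) x₀) :
    ∀ m ⦃y x₀ : ℝ⦄, y < x₀ → ContinuousAt (fun x => iterK K (m + 1) x y) x₀
  | 0, _, _, h => hKc h
  | m + 1, y, x₀, h => by
    obtain ⟨L, hL⟩ := hKb (x₀ + 1 - y)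
    obtain ⟨B, -, hB⟩ := exists_summable_bound_iterK hK hKn hKb (x₀ + 1 - y)
    simp_rw [iterK_add_two hK]
    refine continuousAt_setIntegral_Ioc (lt_add_one x₀) (c := L * B m)
      (fun x => (hKm.of_uncurry_left.mul
        ((measurable_iterK hK hKm (m + 1)).comp (measurable_id.prodMk measurable_const))
        ).aestronglyMeasurable) (fun x z hyz hzx hx => ?_)
      fun z hz => (hKc hz).mul continuousAt_const
    have hKL := hL x z hzx (by linarith)
    rw [Real.norm_eq_abs, abs_of_nonneg (mul_nonneg (hKn x z) (iterK_nonneg hK hKn _ z y))]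
    exact mul_le_mul hKL (hB m z y hyz.le (by linarith)) (iterK_nonneg hK hKn _ z y)
      ((hKn x z).trans hKL)

end Resolvent

section Picard

variable {K : ℝ → ℝ → ℝ} {Z : ℝ → ℝ}

noncomputable def picardIter (K : ℝ → ℝ → ℝ) (Z : ℝ → ℝ) (a : ℝ) (m : ℕ) (x : ℝ) : ℝ :=
  Z x + ∫ y in Ioc a x, iterKSum K m x y * Z y

noncomputable def picardLimit (K : ℝ → ℝ → ℝ) (Z : ℝ → ℝ) (a x : ℝ) : ℝ :=
  Z x + ∫ y in Ioc a x, resolventKernel K x y * Z y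

theorem abs_iterKSum_mul_le (hK : ∀ ⦃x y⦄, x < y → K x y = 0) (hKn : ∀ x y, 0 ≤ K x y)
    (hKb : ∀ r, ∃ L, ∀ x y, y ≤ x → x - y ≤ r → K x y ≤ L) (m : ℕ) (x y z : ℝ) :
    |iterKSum K m x y * z| ≤ |resolventKernel K x y * z| := by
  rw [abs_mul, abs_mul]
  exact mul_le_mul_of_nonneg_right (abs_le_abs_of_nonneg (iterKSum_nonneg hK hKn m x y)
    (iterKSum_le_resolventKernel hK hKn hKb m x y)) (abs_nonneg z)

theorem exists_abs_resolventKernel_mul_le (hK : ∀ ⦃x y⦄, x < y → K x y = 0)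
    (hKn : ∀ x y, 0 ≤ K x y) (hKb : ∀ r, ∃ L, ∀ x y, y ≤ x → x - y ≤ r → K x y ≤ L)
    (hZ : Continuous Z) (a b : ℝ) :
    ∃ C, ∀ x y, a < y → y ≤ x → x ≤ b → |resolventKernel K x y * Z y| ≤ C := by
  obtain ⟨R, hR⟩ := exists_resolventKernel_le hK hKn hKb (b - a)
  obtain ⟨M, hM⟩ := isCompact_Icc.exists_bound_of_continuousOn (hZ.continuousOn (s := Icc a b))
  refine ⟨R * M, fun x y hay hyx hxb => ?_⟩
  have hRxy := hR x y hyx (by linarith)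
  have hR0 : 0 ≤ resolventKernel K x y := tsum_nonneg fun i => iterK_nonneg hK hKn _ x y
  rw [abs_mul, abs_of_nonneg hR0]
  exact mul_le_mul hRxy (hM y ⟨hay.le, hyx.trans hxb⟩) (abs_nonneg _) (hR0.trans hRxy)

theorem integrableOn_iterKSum_mul (hK : ∀ ⦃x y⦄, x < y → K x y = 0) (hKn : ∀ x y, 0 ≤ K x y)
    (hKm : Measurable (uncurry K)) (hKb : ∀ r, ∃ L, ∀ x y, y ≤ x → x - y ≤ r → K x y ≤ L)
    (hZ : Continuous Z) (a : ℝ) (m : ℕ) (x : ℝ) :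
    IntegrableOn (fun y => iterKSum K m x y * Z y) (Ioc a x) := by
  obtain ⟨C, hC⟩ := exists_abs_resolventKernel_mul_le hK hKn hKb hZ a x
  exact Measure.integrableOn_of_bounded measure_Ioc_lt_top.ne
    ((measurable_iterKSum hK hKm m x).mul hZ.measurable).aestronglyMeasurable
    (ae_restrict_of_forall_mem measurableSet_Ioc fun y hy =>
      (abs_iterKSum_mul_le hK hKn hKb m x y _).trans (hC x y hy.1 hy.2 le_rfl))

theorem integrableOn_resolventKernel_mul (hK : ∀ ⦃x y⦄, x < y → K x y = 0)
    (hKn : ∀ x y, 0 ≤ K x y) (hKm : Measurable (uncurry K))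
    (hKb : ∀ r, ∃ L, ∀ x y, y ≤ x → x - y ≤ r → K x y ≤ L) (hZ : Continuous Z) (a x : ℝ) :
    IntegrableOn (fun y => resolventKernel K x y * Z y) (Ioc a x) := by
  obtain ⟨C, hC⟩ := exists_abs_resolventKernel_mul_le hK hKn hKb hZ a x
  exact Measure.integrableOn_of_bounded measure_Ioc_lt_top.ne
    ((measurable_resolventKernel hK hKn hKm hKb x).mul hZ.measurable).aestronglyMeasurable
    (ae_restrict_of_forall_mem measurableSet_Ioc fun y hy => hC x y hy.1 hy.2 le_rfl)

theorem monotone_picardIter (hK : ∀ ⦃x y⦄, x < y → K x y = 0) (hKn : ∀ x y, 0 ≤ K x y)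
    (hKm : Measurable (uncurry K)) (hKb : ∀ r, ∃ L, ∀ x y, y ≤ x → x - y ≤ r → K x y ≤ L)
    (hZ : Continuous Z) (hZn : ∀ y, 0 ≤ Z y) (a x : ℝ) :
    Monotone fun m => picardIter K Z a m x := fun m n hmn =>
  add_le_add le_rfl <| setIntegral_mono_on (integrableOn_iterKSum_mul hK hKn hKm hKb hZ a m x)
    (integrableOn_iterKSum_mul hK hKn hKm hKb hZ a n x) measurableSet_Ioc fun y _ =>
      mul_le_mul_of_nonneg_right (monotone_iterKSum hK hKn x y hmn) (hZn y)

theorem tendstoUniformlyOn_picardIter (hK : ∀ ⦃x y⦄, x < y → K x y = 0)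
    (hKn : ∀ x y, 0 ≤ K x y) (hKm : Measurable (uncurry K))
    (hKb : ∀ r, ∃ L, ∀ x y, y ≤ x → x - y ≤ r → K x y ≤ L) (hZ : Continuous Z) (a b : ℝ) :
    TendstoUniformlyOn (picardIter K Z a) (picardLimit K Z a) atTop (Iic b) := by
  obtain ⟨B, hB, hBle⟩ := exists_summable_bound_iterK hK hKn hKb (b - a)
  obtain ⟨M, hM⟩ := isCompact_Icc.exists_bound_of_continuousOn (hZ.continuousOn (s := Icc a b))
  have hseries : TendstoUniformlyOn (fun m (p : ℝ × ℝ) => iterKSum K m p.1 p.2 * Z p.2)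
      (fun p => resolventKernel K p.1 p.2 * Z p.2) atTop
      {p : ℝ × ℝ | p.1 ≤ b ∧ p.2 ∈ Ioc a p.1} := by
    have hMtest := tendstoUniformlyOn_tsum_nat (hB.mul_right M)
      (f := fun i (p : ℝ × ℝ) => iterK K (i + 1) p.1 p.2 * Z p.2)
      (s := {p : ℝ × ℝ | p.1 ≤ b ∧ p.2 ∈ Ioc a p.1}) fun i p ⟨hpb, hpa, hp⟩ => by
        have hiter := hBle i p.1 p.2 hp (by linarith)
        rw [norm_mul, Real.norm_of_nonneg (iterK_nonneg hK hKn _ _ _)]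
        exact mul_le_mul hiter (hM p.2 ⟨hpa.le, hp.trans hpb⟩) (norm_nonneg _)
          ((iterK_nonneg hK hKn _ _ _).trans hiter)
    simpa only [iterKSum, resolventKernel, Finset.sum_mul, tsum_mul_right] using hMtest
  have hint := tendstoUniformlyOn_setIntegral_Ioc (integrableOn_iterKSum_mul hK hKn hKm hKb hZ a)
    (integrableOn_resolventKernel_mul hK hKn hKm hKb hZ a) hseries
  rw [Metric.tendstoUniformlyOn_iff] at hint ⊢
  simpa only [picardIter, picardLimit, dist_add_left] using hint

theorem continuous_picardIter (hK : ∀ ⦃x y⦄, x < y → K x y = 0) (hKn : ∀ x y, 0 ≤ K x y)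
    (hKm : Measurable (uncurry K)) (hKb : ∀ r, ∃ L, ∀ x y, y ≤ x → x - y ≤ r → K x y ≤ L)
    (hKc : ∀ ⦃y x₀⦄, y < x₀ → ContinuousAt (K · y) x₀) (hZ : Continuous Z) (a : ℝ) (m : ℕ) :
    Continuous (picardIter K Z a m) := by
  refine hZ.add (continuous_iff_continuousAt.2 fun x₀ => ?_)
  obtain ⟨C, hC⟩ := exists_abs_resolventKernel_mul_le hK hKn hKb hZ a (x₀ + 1)
  exact continuousAt_setIntegral_Ioc (lt_add_one x₀)
    (fun x => ((measurable_iterKSum hK hKm m x).mul hZ.measurable).aestronglyMeasurable)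
    (fun x y hay hyx hx => (abs_iterKSum_mul_le hK hKn hKb m x y _).trans (hC x y hay hyx hx))
    fun y hy => (tendsto_finsetSum _ fun i _ =>
      continuousAt_iterK hK hKn hKm hKb hKc i hy).mul continuousAt_const

theorem continuous_picardLimit (hK : ∀ ⦃x y⦄, x < y → K x y = 0) (hKn : ∀ x y, 0 ≤ K x y)
    (hKm : Measurable (uncurry K)) (hKb : ∀ r, ∃ L, ∀ x y, y ≤ x → x - y ≤ r → K x y ≤ L)
    (hKc : ∀ ⦃y x₀⦄, y < x₀ → ContinuousAt (K · y) x₀) (hZ : Continuous Z) (a : ℝ) :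
    Continuous (picardLimit K Z a) :=
  (tendstoLocallyUniformly_iff_forall_isCompact.2 fun _ hs =>
    (tendstoUniformlyOn_picardIter hK hKn hKm hKb hZ a _).mono
      hs.bddAbove.choose_spec).continuous
    (Eventually.of_forall (continuous_picardIter hK hKn hKm hKb hKc hZ a)).frequently

end Picard

section VolterraKernel

variable {W k : ℝ → ℝ}

theorem volKernel_eq_zero_of_lt ⦃x y : ℝ⦄ (h : x < y) : volKernel W k x y = 0 :=
  if_neg h.not_ge

theorem volKernel_nonneg (hW : ∀ t, 0 ≤ t → 0 ≤ W t) (hk : ∀ y, 0 ≤ k y) (x y : ℝ) :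
    0 ≤ volKernel W k x y := by
  unfold volKernel
  split_ifs with h
  exacts [mul_nonneg (hW _ (sub_nonneg.2 h)) (hk y), le_rfl]

theorem measurable_volKernel (hWc : ContinuousOn W (Ici 0)) (hk : Measurable k) :
    Measurable (uncurry (volKernel W k)) := by
  classical
  -- `W` need not be measurable on `(-∞, 0)`, where `volKernel` never evaluates it.
  have hW' : Measurable ((Ici (0 : ℝ)).piecewise W 0) :=
    hWc.measurable_piecewise continuousOn_const measurableSet_Ici
  have heq : volKernel W k = volKernel ((Ici (0 : ℝ)).piecewise W 0) k := by
    ext x y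
    unfold volKernel
    split_ifs with h
    · rw [piecewise_eq_of_mem _ _ _ (show x - y ∈ Ici 0 from sub_nonneg.2 h)]
    · rfl
  rw [heq]
  exact Measurable.ite (measurableSet_le measurable_snd measurable_fst)
    ((hW'.comp (measurable_fst.sub measurable_snd)).mul (hk.comp measurable_snd)) measurable_const

theorem exists_volKernel_le (hW : ∀ t, 0 ≤ t → 0 ≤ W t) (hWc : ContinuousOn W (Ici 0))
    (hk : ∀ y, 0 ≤ k y) (hkb : ∃ C, ∀ y, k y ≤ C) (r : ℝ) :
    ∃ L, ∀ x y, y ≤ x → x - y ≤ r → volKernel W k x y ≤ L := by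
  obtain ⟨C, hC⟩ := hkb
  obtain ⟨M, hM⟩ := isCompact_Icc.exists_bound_of_continuousOn
    (hWc.mono (Icc_subset_Ici_self : Icc 0 r ⊆ Ici 0))
  refine ⟨M * C, fun x y hyx hr => ?_⟩
  have hWM : W (x - y) ≤ M := (le_abs_self _).trans (hM _ ⟨sub_nonneg.2 hyx, hr⟩)
  rw [volKernel, if_pos hyx]
  exact mul_le_mul hWM (hC y) (hk y) ((hW _ (sub_nonneg.2 hyx)).trans hWM)

theorem continuousAt_volKernel (hWc : ContinuousOn W (Ici 0)) ⦃y x₀ : ℝ⦄ (h : y < x₀) :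
    ContinuousAt (volKernel W k · y) x₀ := by
  have hW : ContinuousAt W (x₀ - y) := hWc.continuousAt (Ici_mem_nhds (sub_pos.2 h))
  have hWk : ContinuousAt (fun x => W (x - y) * k y) x₀ :=
    (hW.comp (f := (· - y)) (continuousAt_id.sub continuousAt_const)).mul continuousAt_const
  refine hWk.congr ?_
  filter_upwards [Ioi_mem_nhds h] with x hx
  exact (if_pos hx.le).symm

end VolterraKernel

theorem picardH_eq_picardIter (W k Z : ℝ → ℝ) (a : ℝ) :
    picardH W k Z a = picardIter (volKernel W k) Z a := by
  ext m x
  have hsum : ∀ y, ∑ i ∈ Finset.Icc 1 m, iterK (volKernel W k) i x y =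
      iterKSum (volKernel W k) m x y := fun y => by
    rw [iterKSum, Finset.range_eq_Ico, Finset.sum_Ico_add' (iterK (volKernel W k) · x y),
      ← Finset.Ico_add_one_right_eq_Icc]
  simp only [picardH, picardIter, hsum]
  rw [intervalIntegral_eq_setIntegral_Ioc fun y hy => by
    rw [iterKSum, Finset.sum_eq_zero fun i _ => iterK_eq_zero_of_lt volKernel_eq_zero_of_lt _ hy,
      zero_mul]]

theorem limitH_eq_picardLimit (W k Z : ℝ → ℝ) (a : ℝ) :
    limitH W k Z a = picardLimit (volKernel W k) Z a := by
  ext x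
  rw [limitH, picardLimit, intervalIntegral_eq_setIntegral_Ioc fun y hy => by
    simp [iterK_eq_zero_of_lt volKernel_eq_zero_of_lt _ hy]]
  rfl

theorem stmt18_general (a : ℝ)
    (W : ℝ → ℝ) (hWnonneg : ∀ x, 0 ≤ W x)
    (hWc : ContinuousOn W (Ici 0))
    (k : ℝ → ℝ) (hknonneg : ∀ y, 0 ≤ k y) (hkbdd : ∃ C, ∀ y, k y ≤ C)
    (hkmeas : Measurable k)
    (Z : ℝ → ℝ) (hZc : Continuous Z) (hZnonneg : ∀ x, 0 ≤ Z x) :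
    (∀ x : ℝ, ∀ m n : ℕ, 1 ≤ m → m ≤ n → picardH W k Z a m x ≤ picardH W k Z a n x) ∧
      (∀ s : Set ℝ, IsCompact s →
        TendstoUniformlyOn (fun m x => picardH W k Z a m x) (limitH W k Z a) atTop s) ∧
      Continuous (limitH W k Z a) := by
  have hK : ∀ ⦃x y⦄, x < y → volKernel W k x y = 0 := volKernel_eq_zero_of_lt
  have hKn := volKernel_nonneg (fun t _ => hWnonneg t) hknonneg
  have hKm := measurable_volKernel hWc hkmeas
  have hKb := exists_volKernel_le (fun t _ => hWnonneg t) hWc hknonneg hkbdd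
  rw [picardH_eq_picardIter, limitH_eq_picardLimit]
  refine ⟨fun x m n _ hmn => monotone_picardIter hK hKn hKm hKb hZc hZnonneg a x hmn,
    fun s hs => ?_, continuous_picardLimit hK hKn hKm hKb (continuousAt_volKernel hWc) hZc a⟩
  obtain ⟨b, hb⟩ := hs.bddAbove
  exact (tendstoUniformlyOn_picardIter hK hKn hKm hKb hZc a b).mono hb

/-- the Picard iterates `H_m` are nondecreasing in `m ≥ 1` and converge,
uniformly on every compact subset of `ℝ`, to the continuous function `H`. -/
theorem stmt18 (a : ℝ) (ha : a ≤ 0)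
    (W : ℝ → ℝ) (hW0 : ∀ x < (0:ℝ), W x = 0) (hWnonneg : ∀ x, 0 ≤ W x)
    (hWc : ContinuousOn W (Ici 0))
    (k : ℝ → ℝ) (hknonneg : ∀ y, 0 ≤ k y) (hkbdd : ∃ C, ∀ y, k y ≤ C)
    (hkmeas : Measurable k)
    (Z : ℝ → ℝ) (hZc : Continuous Z) (hZnonneg : ∀ x, 0 ≤ Z x) :
    (∀ x : ℝ, ∀ m n : ℕ, 1 ≤ m → m ≤ n → picardH W k Z a m x ≤ picardH W k Z a n x) ∧
      (∀ s : Set ℝ, IsCompact s →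
        TendstoUniformlyOn (fun m x => picardH W k Z a m x) (limitH W k Z a) atTop s) ∧
      Continuous (limitH W k Z a) :=
  stmt18_general a W hWnonneg hWc k hknonneg hkbdd hkmeas Z hZc hZnonneg
end
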